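/- arXiv:1503.02396 — 5 statements merged into one kernel-verified Lean document; each statement's English description precedes it below -/
import Mathlib

section
/- A weighted graph Ω is t-saturating if and only if its polarization p(Ω) is t-saturating. -/
open scoped Classical

/-- A matching of a vertex-weighted graph: a multiset of (ordered) edges in which
each vertex `v` appears at most `w v` times. -/
def IsWMatching {V : Type*} (G : SimpleGraph V) (w : V → ℕ) (M : Multiset (V × V)) : Prop :=
  (∀ e ∈ M, G.Adj e.1 e.2) ∧
  ∀ v : V, (M.map Prod.fst).count v + (M.map Prod.snd).count v ≤ w v

/-- The matching number of a vertex-weighted graph. -/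
noncomputable def wNu {V : Type*} (G : SimpleGraph V) (w : V → ℕ) : ℕ :=
  sSup {n | ∃ M : Multiset (V × V), IsWMatching G w M ∧ Multiset.card M = n}

/-- The weighted degree of a vertex: the sum of the weights of its neighbors. -/
noncomputable def wDeg {V : Type*} (G : SimpleGraph V) [Fintype V] (w : V → ℕ) (i : V) : ℕ :=
  ∑ j ∈ Finset.univ.filter (fun j => G.Adj i j), w j

/-- A weighted graph is `t`-saturating if `ν(Ω) < t` and
`ν(Ω − N(i)) ≥ t − deg(i)` for every vertex `i`. -/
def IsTSat {V : Type*} (G : SimpleGraph V) [Fintype V] (w : V → ℕ) (t : ℕ) : Prop :=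
  wNu G w < t ∧
  ∀ i : V, t - wDeg G w i ≤ wNu (G.induce {v | ¬ G.Adj i v}) (fun v => w v.1)

/-- The polarization of a weighted graph: each vertex `v` is replaced by `w v` copies. -/
def polarize {V : Type*} (G : SimpleGraph V) (w : V → ℕ) :
    SimpleGraph (Σ v : V, Fin (w v)) where
  Adj a b := G.Adj a.1 b.1
  symm := ⟨fun _ _ h => G.adj_symm h⟩
  loopless := ⟨fun a h => G.irrefl h⟩

lemma count_map_sigma_fst {V : Type*} {w : V → ℕ} [DecidableEq V] [DecidableEq (Σ v : V, Fin (w v))] (t : Multiset (Σ v : V, Fin (w v))) (v : V) :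
    (t.map Sigma.fst).count v = ∑ k : Fin (w v), t.count ⟨v, k⟩ := by
  induction t using Multiset.induction_on with
  | empty => simp
  | cons a s ih =>
    simp only [Multiset.map_cons, Multiset.count_cons, ih, Finset.sum_add_distrib]
    congr 1
    by_cases h : v = a.1
    · subst h
      rw [if_pos rfl]
      have : ∀ k : Fin (w a.1), ((⟨a.1, k⟩ : Σ v, Fin (w v)) = a) ↔ k = a.2 := by
        intro k
        constructor
        · intro h; cases a; cases h; rfl
        · intro h; cases a; cases h; rfl
      simp only [this]
      simp
    · rw [if_neg h]
      have : ∀ k : Fin (w v), ((⟨v, k⟩ : Σ v, Fin (w v)) = a) ↔ False := by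
        intro k; simp only [iff_false]; intro hh; apply h; cases hh; rfl
      simp [this]

lemma exists_lift {V : Type*} (G : SimpleGraph V) (w : V → ℕ) (M : Multiset (V × V))
    (hM : IsWMatching G w M) :
    ∃ M' : Multiset ((Σ v : V, Fin (w v)) × (Σ v : V, Fin (w v))),
      IsWMatching (polarize G w) (fun _ => 1) M' ∧
      M'.map (fun e => (e.1.1, e.2.1)) = M := by
  letI : DecidableEq (Σ v : V, Fin (w v)) := fun a b => Classical.propDecidable (a = b)
  induction M using Multiset.induction_on with
  | empty => exact ⟨0, ⟨by simp, fun v => by simp⟩, by simp⟩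
  | cons a s ih =>
    obtain ⟨hadj, hcnt⟩ := hM
    have hadja : G.Adj a.1 a.2 := hadj a (Multiset.mem_cons_self a s)
    have hane : a.1 ≠ a.2 := hadja.ne
    have hs : IsWMatching G w s := by
      refine ⟨fun e he => hadj e (Multiset.mem_cons_of_mem he), fun v => ?_⟩
      have := hcnt v
      simp only [Multiset.map_cons, Multiset.count_cons] at this
      omega
    obtain ⟨M', ⟨hadj', hcnt'⟩, hproj⟩ := ih hs
    -- the total usage of copies of a vertex equals its endpoint count in s
    have key : ∀ v : V,
        (∑ k : Fin (w v), ((M'.map Prod.fst).count ⟨v, k⟩ + (M'.map Prod.snd).count ⟨v, k⟩))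
        = (s.map Prod.fst).count v + (s.map Prod.snd).count v := by
      intro v
      rw [Finset.sum_add_distrib, ← count_map_sigma_fst, ← count_map_sigma_fst]
      have h1 : (M'.map Prod.fst).map Sigma.fst = s.map Prod.fst := by
        rw [Multiset.map_map, ← hproj, Multiset.map_map]; rfl
      have h2 : (M'.map Prod.snd).map Sigma.fst = s.map Prod.snd := by
        rw [Multiset.map_map, ← hproj, Multiset.map_map]; rfl
      rw [h1, h2]
    -- find fresh copies of a.1 and a.2
    have fresh : ∀ v : V, (s.map Prod.fst).count v + (s.map Prod.snd).count v < w v →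
        ∃ k : Fin (w v), (⟨v, k⟩ : Σ v, Fin (w v)) ∉ M'.map Prod.fst ∧
          (⟨v, k⟩ : Σ v, Fin (w v)) ∉ M'.map Prod.snd := by
      intro v hv
      by_contra hcon
      push_neg at hcon
      have : (w v : ℕ) ≤ ∑ k : Fin (w v),
          ((M'.map Prod.fst).count ⟨v, k⟩ + (M'.map Prod.snd).count ⟨v, k⟩) := by
        calc (w v : ℕ) = ∑ _k : Fin (w v), 1 := by simp
        _ ≤ _ := by
          refine Finset.sum_le_sum (fun k _ => ?_)
          rcases Classical.em ((⟨v, k⟩ : Σ v, Fin (w v)) ∈ M'.map Prod.fst) with h | h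
          · have := Multiset.one_le_count_iff_mem.mpr h
            omega
          · have := Multiset.one_le_count_iff_mem.mpr (hcon k h)
            omega
      rw [key v] at this
      omega
    have hc1 : (s.map Prod.fst).count a.1 + (s.map Prod.snd).count a.1 < w a.1 := by
      have := hcnt a.1
      simp only [Multiset.map_cons, Multiset.count_cons, if_neg hane, if_true] at this
      omega
    have hc2 : (s.map Prod.fst).count a.2 + (s.map Prod.snd).count a.2 < w a.2 := by
      have := hcnt a.2
      simp only [Multiset.map_cons, Multiset.count_cons, if_neg hane.symm, if_true] at this
      omega
    obtain ⟨k1, hk1f, hk1s⟩ := fresh a.1 hc1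
    obtain ⟨k2, hk2f, hk2s⟩ := fresh a.2 hc2
    refine ⟨(⟨a.1, k1⟩, ⟨a.2, k2⟩) ::ₘ M', ⟨?_, ?_⟩, ?_⟩
    · intro e he
      rcases Multiset.mem_cons.mp he with h | h
      · subst h; exact hadja
      · exact hadj' e h
    · intro x
      have hb : (M'.map Prod.fst).count x + (M'.map Prod.snd).count x ≤ 1 := hcnt' x
      show (((⟨a.1, k1⟩, ⟨a.2, k2⟩) ::ₘ M').map Prod.fst).count x +
        (((⟨a.1, k1⟩, ⟨a.2, k2⟩) ::ₘ M').map Prod.snd).count x ≤ 1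
      simp only [Multiset.map_cons, Multiset.count_cons]
      by_cases h1 : x = ⟨a.1, k1⟩
      · subst h1
        have hne2 : (⟨a.1, k1⟩ : Σ v, Fin (w v)) ≠ ⟨a.2, k2⟩ := by
          intro h; exact hane (congrArg Sigma.fst h)
        rw [if_pos rfl, if_neg hne2, Multiset.count_eq_zero_of_notMem hk1f,
          Multiset.count_eq_zero_of_notMem hk1s]
      · by_cases h2 : x = ⟨a.2, k2⟩
        · subst h2
          have hne1 : (⟨a.2, k2⟩ : Σ v, Fin (w v)) ≠ ⟨a.1, k1⟩ := by
            intro h; exact hane.symm (congrArg Sigma.fst h)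
          rw [if_pos rfl, if_neg hne1, Multiset.count_eq_zero_of_notMem hk2f,
            Multiset.count_eq_zero_of_notMem hk2s]
        · rw [if_neg h1, if_neg h2]
          omega
    · simp [hproj]

lemma proj_matching {V : Type*} (G : SimpleGraph V) (w : V → ℕ)
    (M' : Multiset ((Σ v : V, Fin (w v)) × (Σ v : V, Fin (w v))))
    (h : IsWMatching (polarize G w) (fun _ => 1) M') :
    IsWMatching G w (M'.map (fun e => (e.1.1, e.2.1))) := by
  letI : DecidableEq (Σ v : V, Fin (w v)) := fun a b => Classical.propDecidable (a = b)
  obtain ⟨hadj, hcnt⟩ := h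
  constructor
  · intro e he
    obtain ⟨e', he', rfl⟩ := Multiset.mem_map.mp he
    exact hadj e' he'
  · intro v
    have h1 : (M'.map (fun e => (e.1.1, e.2.1))).map Prod.fst = (M'.map Prod.fst).map Sigma.fst := by
      rw [Multiset.map_map, Multiset.map_map]; rfl
    have h2 : (M'.map (fun e => (e.1.1, e.2.1))).map Prod.snd = (M'.map Prod.snd).map Sigma.fst := by
      rw [Multiset.map_map, Multiset.map_map]; rfl
    rw [h1, h2, count_map_sigma_fst, count_map_sigma_fst, ← Finset.sum_add_distrib]
    calc ∑ k : Fin (w v), ((M'.map Prod.fst).count ⟨v, k⟩ + (M'.map Prod.snd).count ⟨v, k⟩)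
        ≤ ∑ _k : Fin (w v), 1 := Finset.sum_le_sum (fun k _ => hcnt ⟨v, k⟩)
      _ = w v := by simp

lemma wNu_polarize {V : Type*} (G : SimpleGraph V) (w : V → ℕ) :
    wNu (polarize G w) (fun _ => 1) = wNu G w := by
  unfold wNu
  congr 1
  ext n
  constructor
  · rintro ⟨M', hM', rfl⟩
    exact ⟨M'.map (fun e => (e.1.1, e.2.1)), proj_matching G w M' hM', by simp⟩
  · rintro ⟨M, hM, rfl⟩
    obtain ⟨M', hM', hproj⟩ := exists_lift G w M hM
    exact ⟨M', hM', by rw [← hproj]; simp⟩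

lemma matching_map {V W : Type*} {G : SimpleGraph V} {H : SimpleGraph W} (e : G ≃g H)
    (w : W → ℕ) (M : Multiset (V × V)) (h : IsWMatching G (fun v => w (e v)) M) :
    IsWMatching H w (M.map (Prod.map e e)) := by
  obtain ⟨hadj, hcnt⟩ := h
  constructor
  · intro p hp
    obtain ⟨q, hq, rfl⟩ := Multiset.mem_map.mp hp
    exact e.map_rel_iff.mpr (hadj q hq)
  · intro u
    have h1 : (M.map (Prod.map e e)).map Prod.fst = (M.map Prod.fst).map e := by
      rw [Multiset.map_map, Multiset.map_map]; rfl
    have h2 : (M.map (Prod.map e e)).map Prod.snd = (M.map Prod.snd).map e := by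
      rw [Multiset.map_map, Multiset.map_map]; rfl
    have hu : u = e (e.symm u) := (e.apply_symm_apply u).symm
    rw [h1, h2, hu, Multiset.count_map_eq_count' _ _ e.injective,
      Multiset.count_map_eq_count' _ _ e.injective]
    exact hcnt (e.symm u)

lemma wNu_iso {V W : Type*} {G : SimpleGraph V} {H : SimpleGraph W} (e : G ≃g H) (w : W → ℕ) :
    wNu G (fun v => w (e v)) = wNu H w := by
  unfold wNu
  congr 1
  ext n
  constructor
  · rintro ⟨M, hM, rfl⟩
    exact ⟨M.map (Prod.map e e), matching_map e w M hM, by simp⟩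
  · rintro ⟨M, hM, rfl⟩
    have hw : (fun u => w (e (e.symm u))) = w := funext fun u => by rw [e.apply_symm_apply]
    have hM' : IsWMatching H (fun u => w (e (e.symm u))) M := by rw [hw]; exact hM
    exact ⟨M.map (Prod.map e.symm e.symm), matching_map e.symm (fun v => w (e v)) M hM', by simp⟩

lemma wDeg_polarize {V : Type*} [Fintype V] (G : SimpleGraph V) (w : V → ℕ)
    (x : Σ v : V, Fin (w v)) :
    wDeg (polarize G w) (fun _ => 1) x = wDeg G w x.1 := by
  unfold wDeg
  rw [Finset.sum_filter, Finset.sum_filter, ← Finset.univ_sigma_univ, Finset.sum_sigma]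
  refine Finset.sum_congr rfl fun v _ => ?_
  by_cases h : G.Adj x.1 v
  · have : ∀ k : Fin (w v), (polarize G w).Adj x ⟨v, k⟩ := fun k => h
    simp [this, h]
  · have : ∀ k : Fin (w v), ¬ (polarize G w).Adj x ⟨v, k⟩ := fun k hk => h hk
    simp [this, h]

def polInduceIso {V : Type*} (G : SimpleGraph V) (w : V → ℕ) (x : Σ v : V, Fin (w v)) :
    polarize (G.induce {v | ¬ G.Adj x.1 v}) (fun v => w v.1) ≃g
      (polarize G w).induce {y | ¬ (polarize G w).Adj x y} where
  toFun := fun p => ⟨⟨p.1.1, p.2⟩, p.1.2⟩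
  invFun := fun q => ⟨⟨q.1.1, q.2⟩, q.1.2⟩
  left_inv := fun p => rfl
  right_inv := fun q => rfl
  map_rel_iff' := Iff.rfl

lemma wNu_induce_polarize {V : Type*} (G : SimpleGraph V) (w : V → ℕ) (x : Σ v : V, Fin (w v)) :
    wNu ((polarize G w).induce {y | ¬ (polarize G w).Adj x y}) (fun _ => 1)
      = wNu (G.induce {v | ¬ G.Adj x.1 v}) (fun v => w v.1) := by
  have h3 := wNu_iso (polInduceIso G w x) (fun _ => (1 : ℕ))
  have h4 := wNu_polarize (G.induce {v | ¬ G.Adj x.1 v}) (fun v => w v.1)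
  exact h3.symm.trans h4

/-- A weighted graph is `t`-saturating iff its polarization is `t`-saturating. -/
theorem isTSat_iff_polarize {V : Type*} [Fintype V] (G : SimpleGraph V) (w : V → ℕ)
    (hw : ∀ v, 0 < w v) (t : ℕ) :
    IsTSat G w t ↔ IsTSat (polarize G w) (fun _ => 1) t := by
  have hnu := wNu_polarize G w
  constructor
  · rintro ⟨h1, h2⟩
    refine ⟨by rw [hnu]; exact h1, ?_⟩
    intro x
    calc t - wDeg (polarize G w) (fun _ => 1) x = t - wDeg G w x.1 := by rw [wDeg_polarize]
      _ ≤ wNu (G.induce {v | ¬ G.Adj x.1 v}) (fun v => w v.1) := h2 x.1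
      _ = _ := (wNu_induce_polarize G w x).symm
  · rintro ⟨h1, h2⟩
    refine ⟨by rw [← hnu]; exact h1, ?_⟩
    intro i
    calc t - wDeg G w i
        = t - wDeg (polarize G w) (fun _ => 1) ⟨i, ⟨0, hw i⟩⟩ := by rw [wDeg_polarize]
      _ ≤ wNu ((polarize G w).induce {y | ¬ (polarize G w).Adj ⟨i, ⟨0, hw i⟩⟩ y}) (fun _ => 1) :=
          h2 ⟨i, ⟨0, hw i⟩⟩
      _ = wNu (G.induce {v | ¬ G.Adj i v}) (fun v => w v.1) :=
          wNu_induce_polarize G w ⟨i, ⟨0, hw i⟩⟩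
end

section
/- Let Ω be a weighted graph and let Ω' be a collapsed weighted graph of Ω, obtained by replacing pairwise non-adjacent vertices v_1,...,v_r with a common neighborhood by a single vertex v of weight a_v = Σ a_{v_i}. Then ν(Ω') = ν(Ω). -/
open scoped Classical

/-- The graph obtained from `H` on `W` by adding `r` new pairwise non-adjacent
vertices, each with neighborhood exactly `N ⊆ W`. Taking `r` vertices and then
`r = 1` (with summed weight) models a weighted graph and its collapse. -/
def collapseBig {W : Type*} (H : SimpleGraph W) (N : Set W) (r : ℕ) :
    SimpleGraph (W ⊕ Fin r) where
  Adj a b :=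
    (∃ x y, a = Sum.inl x ∧ b = Sum.inl y ∧ H.Adj x y) ∨
    (∃ x i, a = Sum.inl x ∧ b = Sum.inr i ∧ x ∈ N) ∨
    (∃ x i, a = Sum.inr i ∧ b = Sum.inl x ∧ x ∈ N)
  symm := by
    constructor
    rintro a b (⟨x, y, rfl, rfl, h⟩ | ⟨x, i, rfl, rfl, h⟩ | ⟨x, i, rfl, rfl, h⟩)
    · exact Or.inl ⟨y, x, rfl, rfl, h.symm⟩
    · exact Or.inr (Or.inr ⟨x, i, rfl, rfl, h⟩)
    · exact Or.inr (Or.inl ⟨x, i, rfl, rfl, h⟩)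
  loopless := by
    constructor
    rintro a (⟨x, y, rfl, h1, h⟩ | ⟨x, i, rfl, h1, h⟩ | ⟨x, i, rfl, h1, h⟩)
    · obtain rfl := Sum.inl.inj h1; exact H.irrefl h
    · exact absurd h1 Sum.inl_ne_inr
    · exact absurd h1 Sum.inr_ne_inl

section AuxLemmas

open Multiset

variable {α : Type*}

private lemma my_exists_le_card {S : Multiset α} {k : ℕ} (h : k ≤ Multiset.card S) :
    ∃ T, T ≤ S ∧ Multiset.card T = k := by
  refine ⟨(S.toList.take k : List α), ?_, ?_⟩
  · have h1 : (S.toList.take k).Subperm S.toList := (List.take_sublist _ _).subperm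
    have := Multiset.coe_le.mpr h1
    rwa [Multiset.coe_toList] at this
  · rw [Multiset.coe_card, List.length_take, Multiset.length_toList]
    omega

private lemma my_split :
    ∀ (n : ℕ) (c : Fin n → ℕ) (S : Multiset α), Multiset.card S ≤ ∑ i, c i →
    ∃ p : Fin n → Multiset α, (∑ i, p i) = S ∧ ∀ i, Multiset.card (p i) ≤ c i
  | 0, c, S, hS => by
      refine ⟨fun _ => 0, ?_, fun i => i.elim0⟩
      have hS0 : S = 0 := Multiset.card_eq_zero.mp (Nat.le_zero.mp (by simpa using hS))
      simp [hS0]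
  | n + 1, c, S, hS => by
      obtain ⟨T, hTS, hTcard⟩ :=
        my_exists_le_card (S := S) (k := min (Multiset.card S) (c 0)) (min_le_left _ _)
      rw [Fin.sum_univ_succ] at hS
      have hcard_sub : Multiset.card (S - T) = Multiset.card S - Multiset.card T := by
        classical
        exact Multiset.card_sub hTS
      obtain ⟨p, hp, hpc⟩ := my_split n (fun i => c i.succ) (S - T)
        (by show Multiset.card (S - T) ≤ ∑ i : Fin n, c i.succ
            rw [hcard_sub, hTcard]; omega)
      refine ⟨Fin.cons T p, ?_, ?_⟩
      · rw [Fin.sum_univ_succ]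
        simp only [Fin.cons_zero, Fin.cons_succ]
        rw [hp]
        exact add_tsub_cancel_of_le hTS
      · intro i
        induction i using Fin.cases with
        | zero => simpa [hTcard] using min_le_right (Multiset.card S) (c 0)
        | succ j => simpa using hpc j

private lemma my_countP_disj (p q : α → Prop) [DecidablePred p] [DecidablePred q]
    (S : Multiset α) (h : ∀ e ∈ S, ¬ (p e ∧ q e)) :
    Multiset.countP p S + Multiset.countP q S ≤ Multiset.card S := by
  induction S using Multiset.induction_on with
  | empty => simp
  | cons a s ih =>
      have h' := fun e he => h e (Multiset.mem_cons_of_mem he)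
      have ha := h a (Multiset.mem_cons_self a s)
      have hih := ih h'
      rw [Multiset.countP_cons, Multiset.countP_cons, Multiset.card_cons]
      by_cases hp : p a <;> by_cases hq : q a
      · exact absurd ⟨hp, hq⟩ ha
      · simp only [hp, hq, if_true, if_false]; omega
      · simp only [hp, hq, if_true, if_false]; omega
      · simp only [hp, hq, if_false]; omega

private lemma my_countP_or (p q : α → Prop) [DecidablePred p] [DecidablePred q] (S : Multiset α) :
    Multiset.countP (fun e => p e ∨ q e) S ≤ Multiset.countP p S + Multiset.countP q S := by
  induction S using Multiset.induction_on with
  | empty => simp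
  | cons a s ih =>
      rw [Multiset.countP_cons, Multiset.countP_cons, Multiset.countP_cons]
      by_cases hp : p a <;> by_cases hq : q a <;>
        simp only [hp, hq, true_or, or_true, false_or, if_true, if_false] <;> omega

variable {A B : Type*}

private lemma count_inl_sumMap [DecidableEq (α ⊕ A)] [DecidableEq (α ⊕ B)]
    (h : A → B) (x : α) (S : Multiset (α ⊕ A)) :
    Multiset.count (Sum.inl x) (S.map (Sum.map id h)) = Multiset.count (Sum.inl x) S := by
  induction S using Multiset.induction_on with
  | empty => simp
  | cons a s ih => cases a <;> simp [Multiset.count_cons, ih]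

private lemma count_inr_mapToOne {r : ℕ} [DecidableEq (α ⊕ Fin 1)] [DecidableEq (α ⊕ Fin r)]
    (S : Multiset (α ⊕ Fin r)) :
    Multiset.count (Sum.inr 0) (S.map (Sum.map id (fun _ => (0 : Fin 1)))) =
      ∑ i : Fin r, Multiset.count (Sum.inr i) S := by
  induction S using Multiset.induction_on with
  | empty => simp
  | cons a s ih =>
      cases a with
      | inl x => simp [Multiset.count_cons, ih]
      | inr j =>
          simp only [Multiset.map_cons, Sum.map_inr, Multiset.count_cons, ih,
            Finset.sum_add_distrib, Sum.inr.injEq, id_eq]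
          rw [if_pos trivial, Finset.sum_ite_eq' Finset.univ j (fun _ => 1)]
          simp

private lemma sumMap_inj {r : ℕ} (i : Fin r) :
    Function.Injective (Sum.map (id : α → α) (fun _ : Fin 1 => i)) := by
  rintro (x | j) (y | k) h
  · simpa using h
  · simp at h
  · simp at h
  · simp [Subsingleton.elim j k]

private lemma count_inr_map_eq {r : ℕ} [DecidableEq (α ⊕ Fin 1)] [DecidableEq (α ⊕ Fin r)]
    (i : Fin r) (S : Multiset (α ⊕ Fin 1)) :
    Multiset.count (Sum.inr i) (S.map (Sum.map id (fun _ : Fin 1 => i))) =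
      Multiset.count (Sum.inr 0) S := by
  have : (Sum.inr i : α ⊕ Fin r) = Sum.map id (fun _ : Fin 1 => i) (Sum.inr 0) := rfl
  rw [this, Multiset.count_map_eq_count' _ _ (sumMap_inj i)]

private lemma count_inr_map_ne {r : ℕ} [DecidableEq (α ⊕ Fin r)]
    {i j : Fin r} (hji : j ≠ i) (S : Multiset (α ⊕ Fin 1)) :
    Multiset.count (Sum.inr j) (S.map (Sum.map id (fun _ : Fin 1 => i))) = 0 := by
  rw [Multiset.count_eq_zero]
  intro hmem
  obtain ⟨a, _, ha⟩ := Multiset.mem_map.mp hmem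
  cases a with
  | inl x => exact absurd ha (by simp)
  | inr k =>
      rw [Sum.map_inr] at ha
      exact hji (Sum.inr.inj ha).symm

private lemma count_inr_map_noR {r : ℕ} [DecidableEq (α ⊕ Fin r)]
    (i : Fin r) (S : Multiset (α ⊕ Fin 1)) (hS : ∀ a ∈ S, (Sum.inr 0 : α ⊕ Fin 1) ≠ a) :
    ∀ j : Fin r, Multiset.count (Sum.inr j) (S.map (Sum.map id (fun _ : Fin 1 => i))) = 0 := by
  intro j
  rw [Multiset.count_eq_zero]
  intro hmem
  obtain ⟨a, haS, ha⟩ := Multiset.mem_map.mp hmem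
  cases a with
  | inl x => simp at ha
  | inr k => exact hS _ haS (congrArg Sum.inr (Subsingleton.elim _ _))

private lemma map_fst_mapProd {β : Type*} (g : α → β) (M : Multiset (α × α)) :
    (M.map (Prod.map g g)).map Prod.fst = (M.map Prod.fst).map g := by
  simp only [Multiset.map_map]
  exact Multiset.map_congr rfl (fun e _ => rfl)

private lemma map_snd_mapProd {β : Type*} (g : α → β) (M : Multiset (α × α)) :
    (M.map (Prod.map g g)).map Prod.snd = (M.map Prod.snd).map g := by
  simp only [Multiset.map_map]
  exact Multiset.map_congr rfl (fun e _ => rfl)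

end AuxLemmas

section MoreAux
variable {α : Type*}

private lemma count_instanceFree (i1 i2 : DecidableEq α) (a : α) (s : Multiset α) :
    @Multiset.count α i1 a s = @Multiset.count α i2 a s := by
  have h : i1 = i2 := by
    funext x y
    exact Subsingleton.elim _ _
  rw [h]

private lemma my_card_filter_le (t p q : α → Prop)
    [DecidablePred t] [DecidablePred p] [DecidablePred q]
    (S : Multiset α) (h : ∀ e ∈ S, t e → p e ∨ q e) :
    Multiset.card (Multiset.filter t S) ≤ Multiset.countP p S + Multiset.countP q S := by
  induction S using Multiset.induction_on with
  | empty => simp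
  | cons a s ih =>
      have ha := h a (Multiset.mem_cons_self a s)
      have ih' := ih (fun e he => h e (Multiset.mem_cons_of_mem he))
      rw [Multiset.filter_cons, Multiset.countP_cons, Multiset.countP_cons, Multiset.card_add]
      by_cases ht : t a
      · rcases ha ht with hp | hq
        · simp only [ht, if_true, hp, Multiset.card_singleton]
          by_cases hq' : q a <;> simp only [hq', if_true, if_false] <;> omega
        · simp only [ht, if_true, hq, Multiset.card_singleton]
          by_cases hp' : p a <;> simp only [hp', if_true, if_false] <;> omega
      · simp only [ht, if_false, Multiset.card_zero]
        by_cases hp' : p a <;> by_cases hq' : q a <;>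
          simp only [hp', hq', if_true, if_false] <;> omega

private lemma my_map_sum {β ι : Type*} (f : α → β) (s : Finset ι) (m : ι → Multiset α) :
    (∑ i ∈ s, m i).map f = ∑ i ∈ s, (m i).map f := by
  classical
  induction s using Finset.induction_on with
  | empty => simp
  | insert _ _ hmem ih => rw [Finset.sum_insert hmem, Finset.sum_insert hmem, Multiset.map_add, ih]

private lemma my_card_sum {ι : Type*} (s : Finset ι) (f : ι → Multiset α) :
    Multiset.card (∑ i ∈ s, f i) = ∑ i ∈ s, Multiset.card (f i) := by
  classical
  induction s using Finset.induction_on with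
  | empty => simp
  | insert _ _ hmem ih => rw [Finset.sum_insert hmem, Finset.sum_insert hmem, Multiset.card_add, ih]

end MoreAux

section MainLemmas

variable {W : Type*} (H : SimpleGraph W) (N : Set W)

private lemma matching_to_one (r : ℕ) (wW : W → ℕ) (wv : Fin r → ℕ)
    (M : Multiset ((W ⊕ Fin r) × (W ⊕ Fin r)))
    (hM : IsWMatching (collapseBig H N r) (Sum.elim wW wv) M) :
    IsWMatching (collapseBig H N 1) (Sum.elim wW (fun _ => ∑ i, wv i))
      (M.map (Prod.map (Sum.map id fun _ => 0) (Sum.map id fun _ => 0))) := by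
  obtain ⟨hadj, hcount⟩ := hM
  constructor
  · rintro e he
    obtain ⟨e₀, he₀, rfl⟩ := Multiset.mem_map.mp he
    rcases hadj e₀ he₀ with ⟨x, y, h1, h2, hxy⟩ | ⟨x, i, h1, h2, hx⟩ | ⟨x, i, h1, h2, hx⟩
    · exact Or.inl ⟨x, y, by simp [Prod.map, h1], by simp [Prod.map, h2], hxy⟩
    · exact Or.inr (Or.inl ⟨x, 0, by simp [Prod.map, h1], by simp [Prod.map, h2], hx⟩)
    · exact Or.inr (Or.inr ⟨x, 0, by simp [Prod.map, h1], by simp [Prod.map, h2], hx⟩)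
  · intro v
    set f : (W ⊕ Fin r) → (W ⊕ Fin 1) := Sum.map id fun _ => 0 with hf
    suffices key :
        Multiset.count v ((M.map (Prod.map f f)).map Prod.fst) +
          Multiset.count v ((M.map (Prod.map f f)).map Prod.snd) ≤
          Sum.elim wW (fun _ => ∑ i, wv i) v by
      convert key using 2 <;> exact count_instanceFree _ _ _ _
    rw [map_fst_mapProd, map_snd_mapProd]
    cases v with
    | inl x =>
        rw [hf, count_inl_sumMap, count_inl_sumMap]
        have h : Multiset.count (Sum.inl x) (M.map Prod.fst) +
            Multiset.count (Sum.inl x) (M.map Prod.snd) ≤ wW x := by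
          have h0 := hcount (Sum.inl x)
          simp only [Sum.elim_inl] at h0
          convert h0 using 2 <;> exact count_instanceFree _ _ _ _
        simpa using h
    | inr j =>
        have hj : j = 0 := Subsingleton.elim _ _
        subst hj
        rw [hf, count_inr_mapToOne, count_inr_mapToOne]
        simp only [Sum.elim_inr]
        rw [← Finset.sum_add_distrib]
        refine Finset.sum_le_sum fun i _ => ?_
        have h0 := hcount (Sum.inr i)
        simp only [Sum.elim_inr] at h0
        refine le_trans (le_of_eq ?_) h0
        congr 1 <;> exact count_instanceFree _ _ _ _

private lemma matching_to_r {r : ℕ} (hr : 0 < r) (wW : W → ℕ) (wv : Fin r → ℕ)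
    (M : Multiset ((W ⊕ Fin 1) × (W ⊕ Fin 1)))
    (hM : IsWMatching (collapseBig H N 1) (Sum.elim wW (fun _ => ∑ i, wv i)) M) :
    ∃ M' : Multiset ((W ⊕ Fin r) × (W ⊕ Fin r)),
      IsWMatching (collapseBig H N r) (Sum.elim wW wv) M' ∧
      Multiset.card M' = Multiset.card M := by
  obtain ⟨hadj, hcount⟩ := hM
  set touch : (W ⊕ Fin 1) × (W ⊕ Fin 1) → Prop :=
    fun e => (Sum.inr 0 : W ⊕ Fin 1) = e.1 ∨ (Sum.inr 0 : W ⊕ Fin 1) = e.2 with htouch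
  set E := M.filter touch with hE
  set M₀ := M.filter (fun e => ¬ touch e) with hM₀
  have hsplitM : E + M₀ = M := Multiset.filter_add_not touch M
  have hnotboth : ∀ e ∈ M,
      ¬ ((Sum.inr 0 : W ⊕ Fin 1) = e.1 ∧ (Sum.inr 0 : W ⊕ Fin 1) = e.2) := by
    rintro e he ⟨h1, h2⟩
    rcases hadj e he with ⟨x, y, hx, hy, _⟩ | ⟨x, i, hx, hy, _⟩ | ⟨x, i, hx, hy, _⟩ <;>
      simp_all
  have hcountP_fst : Multiset.countP (fun e : (W ⊕ Fin 1) × (W ⊕ Fin 1) =>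
      (Sum.inr 0 : W ⊕ Fin 1) = e.1) M = Multiset.count (Sum.inr 0) (M.map Prod.fst) := by
    rw [Multiset.count_map, Multiset.countP_eq_card_filter]
  have hcountP_snd : Multiset.countP (fun e : (W ⊕ Fin 1) × (W ⊕ Fin 1) =>
      (Sum.inr 0 : W ⊕ Fin 1) = e.2) M = Multiset.count (Sum.inr 0) (M.map Prod.snd) := by
    rw [Multiset.count_map, Multiset.countP_eq_card_filter]
  have hcardE : Multiset.card E ≤ ∑ i, wv i := by
    have hle := my_card_filter_le touch
        (fun e : (W ⊕ Fin 1) × (W ⊕ Fin 1) => (Sum.inr 0 : W ⊕ Fin 1) = e.1)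
        (fun e => (Sum.inr 0 : W ⊕ Fin 1) = e.2) M
        (fun e _ ht => by rw [htouch] at ht; exact ht)
    have h4 : Multiset.count (Sum.inr (0 : Fin 1)) (M.map Prod.fst) +
        Multiset.count (Sum.inr (0 : Fin 1)) (M.map Prod.snd) ≤ ∑ i, wv i := by
      have h0 := hcount (Sum.inr 0)
      simp only [Sum.elim_inr] at h0
      convert h0 using 2 <;> exact count_instanceFree _ _ _ _
    rw [hE]
    omega
  obtain ⟨P, hPsum, hPcard⟩ := my_split r wv E hcardE
  have hPleE : ∀ i, P i ≤ E := fun i => by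
    rw [← hPsum]
    exact Finset.single_le_sum (f := P) (fun _ _ => zero_le) (Finset.mem_univ i)
  have hPmem : ∀ i, ∀ e ∈ P i, e ∈ M ∧ touch e := by
    intro i e he
    have heE : e ∈ E := Multiset.mem_of_le (hPleE i) he
    rw [hE, Multiset.mem_filter] at heE
    exact heE
  set g : Fin r → ((W ⊕ Fin 1) → (W ⊕ Fin r)) := fun i => Sum.map id (fun _ => i) with hg
  set i₀ : Fin r := ⟨0, hr⟩ with hi₀
  set M' : Multiset ((W ⊕ Fin r) × (W ⊕ Fin r)) :=
    M₀.map (Prod.map (g i₀) (g i₀)) + ∑ i, (P i).map (Prod.map (g i) (g i)) with hM'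
  have hMeq : M₀ + ∑ i, P i = M := by rw [hPsum, add_comm]; exact hsplitM
  have hM'fst : M'.map Prod.fst =
      (M₀.map Prod.fst).map (g i₀) + ∑ i, ((P i).map Prod.fst).map (g i) := by
    rw [hM', Multiset.map_add, my_map_sum]
    congr 1
    · exact map_fst_mapProd _ _
    · exact Finset.sum_congr rfl fun i _ => map_fst_mapProd _ _
  have hM'snd : M'.map Prod.snd =
      (M₀.map Prod.snd).map (g i₀) + ∑ i, ((P i).map Prod.snd).map (g i) := by
    rw [hM', Multiset.map_add, my_map_sum]
    congr 1
    · exact map_snd_mapProd _ _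
    · exact Finset.sum_congr rfl fun i _ => map_snd_mapProd _ _
  refine ⟨M', ⟨?_, ?_⟩, ?_⟩
  · -- adjacency
    intro e he
    rw [hM', Multiset.mem_add] at he
    rcases he with he | he
    · obtain ⟨e₀, he₀, rfl⟩ := Multiset.mem_map.mp he
      rw [hM₀] at he₀
      have hnt : ¬ touch e₀ := (Multiset.mem_filter.mp he₀).2
      have he₀M : e₀ ∈ M := (Multiset.mem_filter.mp he₀).1
      rcases hadj e₀ he₀M with ⟨x, y, h1, h2, hxy⟩ | ⟨x, i, h1, h2, hx⟩ | ⟨x, i, h1, h2, hx⟩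
      · exact Or.inl ⟨x, y, by simp [Prod.map, h1, hg], by simp [Prod.map, h2, hg], hxy⟩
      · refine absurd ?_ hnt
        rw [htouch]
        exact Or.inr (by rw [h2]; exact congrArg Sum.inr (Subsingleton.elim _ _))
      · refine absurd ?_ hnt
        rw [htouch]
        exact Or.inl (by rw [h1]; exact congrArg Sum.inr (Subsingleton.elim _ _))
    · rw [Multiset.mem_sum] at he
      obtain ⟨i, -, he⟩ := he
      obtain ⟨e₀, he₀, rfl⟩ := Multiset.mem_map.mp he
      have he₀M : e₀ ∈ M := (hPmem i e₀ he₀).1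
      rcases hadj e₀ he₀M with ⟨x, y, h1, h2, hxy⟩ | ⟨x, j, h1, h2, hx⟩ | ⟨x, j, h1, h2, hx⟩
      · exact Or.inl ⟨x, y, by simp [Prod.map, h1, hg], by simp [Prod.map, h2, hg], hxy⟩
      · exact Or.inr (Or.inl ⟨x, i, by simp [Prod.map, h1, hg], by simp [Prod.map, h2, hg], hx⟩)
      · exact Or.inr (Or.inr ⟨x, i, by simp [Prod.map, h1, hg], by simp [Prod.map, h2, hg], hx⟩)
  · -- counts
    intro v
    suffices key : Multiset.count v (M'.map Prod.fst) + Multiset.count v (M'.map Prod.snd) ≤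
        Sum.elim wW wv v by
      convert key using 2 <;> exact count_instanceFree _ _ _ _
    rw [hM'fst, hM'snd, Multiset.count_add, Multiset.count_add,
      Multiset.count_sum', Multiset.count_sum']
    have hMfst : ∀ u : W ⊕ Fin 1, Multiset.count u (M.map Prod.fst) =
        Multiset.count u (M₀.map Prod.fst) + ∑ i, Multiset.count u ((P i).map Prod.fst) := by
      intro u
      conv_lhs => rw [← hMeq]
      rw [Multiset.map_add, Multiset.count_add, my_map_sum, Multiset.count_sum']
    have hMsnd : ∀ u : W ⊕ Fin 1, Multiset.count u (M.map Prod.snd) =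
        Multiset.count u (M₀.map Prod.snd) + ∑ i, Multiset.count u ((P i).map Prod.snd) := by
      intro u
      conv_lhs => rw [← hMeq]
      rw [Multiset.map_add, Multiset.count_add, my_map_sum, Multiset.count_sum']
    cases v with
    | inl x =>
        have hc : ∀ (S : Multiset (W ⊕ Fin 1)) (i : Fin r),
            Multiset.count (Sum.inl x) (S.map (g i)) = Multiset.count (Sum.inl x) S := by
          intro S i
          rw [hg]
          exact count_inl_sumMap _ x S
        simp only [hc]
        rw [← hMfst, ← hMsnd]
        have h : Multiset.count (Sum.inl x) (M.map Prod.fst) +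
            Multiset.count (Sum.inl x) (M.map Prod.snd) ≤ wW x := by
          have h0 := hcount (Sum.inl x)
          simp only [Sum.elim_inl] at h0
          convert h0 using 2 <;> exact count_instanceFree _ _ _ _
        simpa using h
    | inr i =>
        have h0fst : Multiset.count (Sum.inr i) ((M₀.map Prod.fst).map (g i₀)) = 0 := by
          rw [hg]
          refine count_inr_map_noR i₀ _ ?_ i
          rintro a ha rfl
          obtain ⟨e₀, he₀, he'⟩ := Multiset.mem_map.mp ha
          rw [hM₀] at he₀
          have hnt : ¬ touch e₀ := (Multiset.mem_filter.mp he₀).2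
          rw [htouch] at hnt
          exact hnt (Or.inl he'.symm)
        have h0snd : Multiset.count (Sum.inr i) ((M₀.map Prod.snd).map (g i₀)) = 0 := by
          rw [hg]
          refine count_inr_map_noR i₀ _ ?_ i
          rintro a ha rfl
          obtain ⟨e₀, he₀, he'⟩ := Multiset.mem_map.mp ha
          rw [hM₀] at he₀
          have hnt : ¬ touch e₀ := (Multiset.mem_filter.mp he₀).2
          rw [htouch] at hnt
          exact hnt (Or.inr he'.symm)
        have hsfst : (∑ k, Multiset.count (Sum.inr i) (((P k).map Prod.fst).map (g k))) =
            Multiset.count (Sum.inr 0) ((P i).map Prod.fst) := by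
          rw [Finset.sum_eq_single i]
          · rw [hg]; exact count_inr_map_eq i _
          · intro k _ hk
            rw [hg]; exact count_inr_map_ne (Ne.symm hk) _
          · exact fun h => absurd (Finset.mem_univ i) h
        have hssnd : (∑ k, Multiset.count (Sum.inr i) (((P k).map Prod.snd).map (g k))) =
            Multiset.count (Sum.inr 0) ((P i).map Prod.snd) := by
          rw [Finset.sum_eq_single i]
          · rw [hg]; exact count_inr_map_eq i _
          · intro k _ hk
            rw [hg]; exact count_inr_map_ne (Ne.symm hk) _
          · exact fun h => absurd (Finset.mem_univ i) h
        rw [h0fst, h0snd, hsfst, hssnd]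
        have hPfst : Multiset.count (Sum.inr (0 : Fin 1)) ((P i).map Prod.fst) =
            Multiset.countP (fun e : (W ⊕ Fin 1) × (W ⊕ Fin 1) =>
              (Sum.inr 0 : W ⊕ Fin 1) = e.1) (P i) := by
          rw [Multiset.count_map, Multiset.countP_eq_card_filter]
        have hPsnd : Multiset.count (Sum.inr (0 : Fin 1)) ((P i).map Prod.snd) =
            Multiset.countP (fun e : (W ⊕ Fin 1) × (W ⊕ Fin 1) =>
              (Sum.inr 0 : W ⊕ Fin 1) = e.2) (P i) := by
          rw [Multiset.count_map, Multiset.countP_eq_card_filter]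
        have hd := my_countP_disj (fun e : (W ⊕ Fin 1) × (W ⊕ Fin 1) =>
            (Sum.inr 0 : W ⊕ Fin 1) = e.1)
          (fun e => (Sum.inr 0 : W ⊕ Fin 1) = e.2) (P i)
          (fun e he => hnotboth e (hPmem i e he).1)
        have hPc := hPcard i
        simp only [Sum.elim_inr]
        rw [hPfst, hPsnd]
        omega
  · -- cardinality
    rw [hM', Multiset.card_add, Multiset.card_map, my_card_sum]
    conv_rhs => rw [← hMeq]
    rw [Multiset.card_add, my_card_sum]
    simp [Multiset.card_map]

end MainLemmas

/-- Collapsing pairwise non-adjacent vertices `v_1, …, v_r` with a common neighborhood `N`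
into a single vertex of weight `∑ a_{v_i}` preserves the matching number. -/
theorem wNu_collapse {W : Type*} (H : SimpleGraph W) (N : Set W) (r : ℕ) (hr : 0 < r)
    (wW : W → ℕ) (wv : Fin r → ℕ) (hwW : ∀ x, 0 < wW x) (hwv : ∀ i, 0 < wv i) :
    wNu (collapseBig H N 1) (Sum.elim wW (fun _ => ∑ i, wv i)) =
      wNu (collapseBig H N r) (Sum.elim wW wv) := by
  unfold wNu
  congr 1
  ext n
  constructor
  · rintro ⟨M, hM, rfl⟩
    obtain ⟨M', hM', hcard⟩ := matching_to_r H N hr wW wv M hM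
    exact ⟨M', hM', hcard⟩
  · rintro ⟨M, hM, rfl⟩
    exact ⟨_, matching_to_one H N r wW wv M hM, Multiset.card_map _ _⟩
end

section
/- Let Γ be a t-saturating simple graph with matching number ν(Γ) = t − 1 and let M be a maximum matching of Γ. Then for every vertex i of Γ not covered by M, there is an M-augmenting odd closed walk (cycle) P_i starting and ending at i, alternating between edges not in M and edges in M. -/
open scoped Classical

/-- A matching of a simple graph: a set of edges that are pairwise vertex-disjoint. -/
def IsSMatching {V : Type*} (G : SimpleGraph V) (M : Set (Sym2 V)) : Prop :=
  M ⊆ G.edgeSet ∧ M.Pairwise fun e f => ∀ v, v ∈ e → v ∉ f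

/-- A vertex is covered by a matching if it lies in one of its edges. -/
def Covered {V : Type*} (M : Set (Sym2 V)) (v : V) : Prop := ∃ e ∈ M, v ∈ e

/-- An `M`-augmenting cycle at `i`: a closed odd walk starting and ending at `i`
that alternates between edges not in `M` and edges in `M` (so the two edges
meeting at `i` are not in `M`). -/
def IsAugCycle {V : Type*} (G : SimpleGraph V) (M : Set (Sym2 V)) {i : V}
    (p : G.Walk i i) : Prop :=
  Odd p.length ∧
    ∀ (k : ℕ) (hk : k < p.edges.length), (p.edges.get ⟨k, hk⟩ ∈ M ↔ k % 2 = 1)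

/-- An `M`-augmenting path from `i` to `j`: a path whose edges alternate,
beginning and ending with edges not in `M`. -/
def IsAugPath {V : Type*} (G : SimpleGraph V) (M : Set (Sym2 V)) {i j : V}
    (p : G.Walk i j) : Prop :=
  p.IsPath ∧ Odd p.length ∧
    ∀ (k : ℕ) (hk : k < p.edges.length), (p.edges.get ⟨k, hk⟩ ∈ M ↔ k % 2 = 1)

namespace AugAux


variable {V : Type*} {G : SimpleGraph V} {A : Set (Sym2 V)}

noncomputable def pfun (A : Set (Sym2 V)) (v : V) : Option V :=
  if h : ∃ u, s(v, u) ∈ A then some h.choose else none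

theorem pfun_eq_some_iff (hA : IsSMatching G A) {v u : V} :
    pfun A v = some u ↔ s(v, u) ∈ A := by
  constructor
  · intro h
    unfold pfun at h
    split_ifs at h with h'
    · obtain ⟨rfl⟩ : h'.choose = u := by simpa using h
      exact h'.choose_spec
  · intro h
    have h' : ∃ u, s(v, u) ∈ A := ⟨u, h⟩
    have hc := h'.choose_spec
    unfold pfun
    rw [dif_pos h']
    congr 1
    by_contra hne
    have hedges : s(v, h'.choose) ≠ s(v, u) :=
      fun he => hne (Sym2.congr_right.mp he)
    have := hA.2 hc h hedges v (by simp) (by simp)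
    exact this
 
theorem pfun_eq_none_iff {v : V} :
    pfun A v = none ↔ ¬ Covered A v := by
  unfold pfun
  constructor
  · intro h hc
    obtain ⟨e, he, hv⟩ := hc
    obtain ⟨u, rfl⟩ := Sym2.mem_iff_exists.mp hv
    rw [dif_pos ⟨u, he⟩] at h
    simp at h
  · intro h
    rw [dif_neg]
    rintro ⟨u, hu⟩
    exact h ⟨_, hu, by simp⟩

theorem pfun_symm (hA : IsSMatching G A) {v u : V} (h : pfun A v = some u) :
    pfun A u = some v := by
  rw [pfun_eq_some_iff hA] at h ⊢
  rwa [Sym2.eq_swap]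

theorem pfun_ne_self (hA : IsSMatching G A) {v : V} : pfun A v ≠ some v := by
  intro h
  rw [pfun_eq_some_iff hA] at h
  have := hA.1 h
  simp at this

theorem pfun_adj (hA : IsSMatching G A) {v u : V} (h : pfun A v = some u) :
    G.Adj v u := by
  rw [pfun_eq_some_iff hA] at h
  simpa using hA.1 h

theorem covered_iff_pfun {v : V} : Covered A v ↔ ∃ u, pfun A v = some u := by
  rw [← not_iff_not, ← pfun_eq_none_iff]
  cases h : pfun A v <;> simp



variable {V : Type*}

/-- Alternating chain: follow `p`, then `q`, then `p`, ... -/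
def alt (p q : V → Option V) : ℕ → V → Option V
  | 0, v => some v
  | n+1, v => (p v).bind (alt q p n)

/-- The step function used at step `n`. -/
def tau (p q : V → Option V) (n : ℕ) : V → Option V := if n % 2 = 0 then p else q

@[simp] theorem alt_zero (p q : V → Option V) (v : V) : alt p q 0 v = some v := rfl

theorem alt_succ (p q : V → Option V) (n : ℕ) (v : V) :
    alt p q (n+1) v = (p v).bind (alt q p n) := rfl

theorem tau_succ (p q : V → Option V) (n : ℕ) :
    tau q p n = tau p q (n+1) := by
  unfold tau
  rcases Nat.mod_two_eq_zero_or_one n with h | h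
  · rw [if_pos h, if_neg (by omega)]
  · rw [if_neg (by omega), if_pos (by omega)]

theorem alt_succ' (p q : V → Option V) (n : ℕ) (v : V) :
    alt p q (n+1) v = (alt p q n v).bind (tau p q n) := by
  induction n generalizing p q v with
  | zero => simp [alt_succ, tau]; cases p v <;> rfl
  | succ n ih =>
    rw [alt_succ, alt_succ]
    cases hp : p v with
    | none => simp
    | some u =>
      simp only [Option.bind_some]
      rw [ih q p u, ← tau_succ]

/-- Values of the chain are defined on a downward-closed set of indices. -/
theorem alt_mono (p q : V → Option V) {k l : ℕ} {v : V} (hkl : k ≤ l)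
    (h : alt p q l v ≠ none) : ∃ b, alt p q k v = some b := by
  induction l with
  | zero =>
    interval_cases k
    exact ⟨v, rfl⟩
  | succ l ih =>
    rcases Nat.lt_or_ge k (l+1) with hk | hk
    · have hl : alt p q l v ≠ none := by
        intro hn
        rw [alt_succ', hn] at h
        exact h rfl
      exact ih (by omega) hl
    · obtain rfl : k = l + 1 := by omega
      exact Option.ne_none_iff_exists'.mp h

/-- Step relation: consecutive chain values are related by `tau`. -/
theorem alt_step (p q : V → Option V) {n : ℕ} {v b : V}
    (h : alt p q (n+1) v = some b) :
    ∃ a, alt p q n v = some a ∧ tau p q n a = some b := by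
  rw [alt_succ'] at h
  cases hx : alt p q n v with
  | none => rw [hx] at h; simp at h
  | some a => rw [hx] at h; exact ⟨a, rfl, h⟩

section Props

variable {p q : V → Option V}
  (hp : ∀ v u, p v = some u → p u = some v)
  (hq : ∀ v u, q v = some u → q u = some v)
  (hpi : ∀ v, p v ≠ some v) (hqi : ∀ v, q v ≠ some v)

include hp hq in
theorem tau_symm {n : ℕ} {a b : V} (h : tau p q n a = some b) : tau p q n b = some a := by
  unfold tau at *
  split_ifs at * <;> [exact hp _ _ h; exact hq _ _ h]

include hpi hqi in
theorem tau_ne_self {n : ℕ} {a : V} : tau p q n a ≠ some a := by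
  unfold tau; split_ifs <;> [exact hpi a; exact hqi a]

include hp hq hpi hqi in
/-- The alternating chain starting at a `q`-unsaturated vertex never repeats. -/
theorem alt_inj {v : V} (hv : q v = none) :
    ∀ l k a, k < l → alt p q k v = some a → alt p q l v = some a → False := by
  intro l
  induction l using Nat.strong_induction_on with
  | _ l IH =>
    intro k a hkl hk hl
    obtain ⟨l', rfl⟩ : ∃ l', l = l' + 1 := ⟨l - 1, by omega⟩
    obtain ⟨c, hc, hca⟩ := alt_step p q hl
    have hac : tau p q l' a = some c := tau_symm hp hq hca
    rcases Nat.eq_zero_or_pos k with rfl | hk0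
    · -- a = v
      obtain rfl : v = a := by simpa using hk
      rcases Nat.mod_two_eq_zero_or_one l' with hev | hod
      · -- tau l' = p ; then x 1 = some c = x l'
        have hx1 : alt p q 1 v = some c := by
          rw [alt_succ']
          simp only [alt_zero, Option.bind_some]
          unfold tau at hac ⊢
          rw [if_pos (by omega)]
          rwa [if_pos hev] at hac
        rcases Nat.lt_or_ge 1 l' with h1 | h1
        · exact IH l' (by omega) 1 c h1 hx1 hc
        · interval_cases l'
          · -- l = 1 : x 1 = some v contradicts tau_ne_self
            obtain ⟨a', ha', h2⟩ := alt_step p q hl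
            obtain rfl : a' = v := by simpa using ha'.symm
            exact tau_ne_self hpi hqi h2
          · -- l' = 1 : but l' even
            omega
      · -- tau l' = q : q v ≠ none
        unfold tau at hac
        rw [if_neg (by omega)] at hac
        rw [hv] at hac
        simp at hac
    · -- k ≥ 1
      obtain ⟨k', rfl⟩ : ∃ k', k = k' + 1 := ⟨k - 1, by omega⟩
      obtain ⟨b, hb, hba⟩ := alt_step p q hk
      have hab : tau p q k' a = some b := tau_symm hp hq hba
      rcases eq_or_ne (l' % 2) (k' % 2) with hpar | hpar
      · -- same parity: b = c, x k' = x l'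
        have htt : tau p q l' = tau p q k' := by
          unfold tau
          rcases Nat.mod_two_eq_zero_or_one k' with h | h
          · rw [if_pos (by omega), if_pos h]
          · rw [if_neg (by omega), if_neg (by omega)]
        rw [htt, hab] at hac
        obtain rfl : b = c := by simpa using hac
        exact IH l' (by omega) k' b (by omega) hb hc
      · -- opposite parity: tau l' = tau (k'+1)
        have htt : tau p q l' = tau p q (k'+1) := by
          unfold tau
          rcases Nat.mod_two_eq_zero_or_one k' with h | h
          · rw [if_neg (by omega), if_neg (by omega)]
          · rw [if_pos (by omega), if_pos (by omega)]
        rcases lt_trichotomy (k'+2) l' with h2 | h2 | h2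
        · have hx : alt p q (k'+2) v = some c := by
            rw [alt_succ', hk]
            simp only [Option.bind_some]
            rw [← htt]
            exact hac
          exact IH l' (by omega) (k'+2) c h2 hx hc
        · -- k'+2 = l' has the same parity as k': contradiction
          omega
        · -- l' = k'+1
          obtain rfl : l' = k' + 1 := by omega
          rw [alt_succ', hk] at hl
          simp only [Option.bind_some] at hl
          exact tau_ne_self hpi hqi hl

include hp hq in
/-- If two alternating chains share a vertex, one start lies on the other chain. -/
theorem alt_meet {v v' : V} :
    ∀ m k a, alt p q k v = some a → alt p q m v' = some a →
      (∃ r, alt p q r v = some v') ∨ (∃ r, alt p q r v' = some v) := by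
  intro m
  induction m using Nat.strong_induction_on with
  | _ m IH =>
    intro k a hk hm
    rcases Nat.eq_zero_or_pos k with rfl | hk0
    · obtain rfl : v = a := by simpa [alt] using hk
      exact Or.inr ⟨m, hm⟩
    rcases Nat.eq_zero_or_pos m with rfl | hm0
    · obtain rfl : v' = a := by simpa [alt] using hm
      exact Or.inl ⟨k, hk⟩
    obtain ⟨k', rfl⟩ : ∃ k', k = k' + 1 := ⟨k - 1, by omega⟩
    obtain ⟨m', rfl⟩ : ∃ m', m = m' + 1 := ⟨m - 1, by omega⟩
    obtain ⟨b, hb, hba⟩ := alt_step p q hk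
    obtain ⟨c, hc, hca⟩ := alt_step p q hm
    have hab : tau p q k' a = some b := tau_symm hp hq hba
    have hac : tau p q m' a = some c := tau_symm hp hq hca
    rcases eq_or_ne (m' % 2) (k' % 2) with hpar | hpar
    · -- same parity: b = c
      have htt : tau p q m' = tau p q k' := by
        unfold tau
        rcases Nat.mod_two_eq_zero_or_one k' with h | h
        · rw [if_pos (by omega), if_pos h]
        · rw [if_neg (by omega), if_neg (by omega)]
      rw [htt, hab] at hac
      obtain rfl : b = c := by simpa using hac
      exact IH m' (by omega) k' b hb hc
    · -- opposite parity: x (k'+2) = some c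
      have htt : tau p q m' = tau p q (k'+1) := by
        unfold tau
        rcases Nat.mod_two_eq_zero_or_one k' with h | h
        · rw [if_neg (by omega), if_neg (by omega)]
        · rw [if_pos (by omega), if_pos (by omega)]
      have hx : alt p q (k'+2) v = some c := by
        rw [alt_succ', hk]
        simp only [Option.bind_some]
        rw [← htt]
        exact hac
      exact IH m' (by omega) (k'+2) c hx hc

end Props


theorem card_even_odd (m : ℕ) :
    (((Finset.range m).filter (fun k => k % 2 = 0)).card = (m+1)/2) ∧
      (((Finset.range m).filter (fun k => k % 2 = 1)).card = m/2) := by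
  induction m with
  | zero => simp
  | succ n ih =>
    obtain ⟨ih1, ih2⟩ := ih
    rw [Finset.range_add_one, Finset.filter_insert, Finset.filter_insert]
    rcases Nat.mod_two_eq_zero_or_one n with h | h
    · rw [if_pos h, if_neg (by omega), Finset.card_insert_of_notMem (by simp)]
      omega
    · rw [if_neg (by omega), if_pos h, Finset.card_insert_of_notMem (by simp)]
      omega

variable {G : SimpleGraph V}

/-- Augmenting a matching along an alternating path of odd length with
unsaturated endpoints. -/
theorem augSwap [Fintype V] {A : Set (Sym2 V)} (hA : IsSMatching G A)
    {c : ℕ → V} {m : ℕ} (hm : m % 2 = 1)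
    (hinj : ∀ k l, k ≤ m → l ≤ m → c k = c l → k = l)
    (hadj : ∀ k, k < m → G.Adj (c k) (c (k+1)))
    (halt : ∀ k, k < m → (s(c k, c (k+1)) ∈ A ↔ k % 2 = 1))
    (h0 : ¬ Covered A (c 0)) (hlast : ¬ Covered A (c m)) :
    ∃ A' : Set (Sym2 V), IsSMatching G A' ∧ A'.ncard = A.ncard + 1 ∧
      (∀ v, Covered A' v ↔ (Covered A v ∨ ∃ k, k ≤ m ∧ c k = v)) ∧
      (∀ e : Sym2 V, (∀ k, k ≤ m → ¬ c k ∈ e) → (e ∈ A' ↔ e ∈ A)) := by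
  classical
  set Eadd : Finset (Sym2 V) :=
    ((Finset.range m).filter (fun k => k % 2 = 0)).image (fun k => s(c k, c (k+1))) with hEadd
  set Erem : Finset (Sym2 V) :=
    ((Finset.range m).filter (fun k => k % 2 = 1)).image (fun k => s(c k, c (k+1))) with hErem
  have memAdd : ∀ e : Sym2 V, e ∈ Eadd ↔ ∃ k, k < m ∧ k % 2 = 0 ∧ e = s(c k, c (k+1)) := by
    intro e
    simp only [hEadd, Finset.mem_image, Finset.mem_filter, Finset.mem_range]
    constructor
    · rintro ⟨k, ⟨h1, h2⟩, h3⟩; exact ⟨k, h1, h2, h3.symm⟩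
    · rintro ⟨k, h1, h2, h3⟩; exact ⟨k, ⟨h1, h2⟩, h3.symm⟩
  have memRem : ∀ e : Sym2 V, e ∈ Erem ↔ ∃ k, k < m ∧ k % 2 = 1 ∧ e = s(c k, c (k+1)) := by
    intro e
    simp only [hErem, Finset.mem_image, Finset.mem_filter, Finset.mem_range]
    constructor
    · rintro ⟨k, ⟨h1, h2⟩, h3⟩; exact ⟨k, h1, h2, h3.symm⟩
    · rintro ⟨k, h1, h2, h3⟩; exact ⟨k, ⟨h1, h2⟩, h3.symm⟩
  -- vertices of path-edges are path vertices
  have vtxAdd : ∀ e ∈ Eadd, ∀ v ∈ e, ∃ k, k ≤ m ∧ c k = v := by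
    intro e he v hv
    obtain ⟨k, hk, -, rfl⟩ := (memAdd e).mp he
    rcases Sym2.mem_iff.mp hv with rfl | rfl
    exacts [⟨k, by omega, rfl⟩, ⟨k+1, by omega, rfl⟩]
  have vtxRem : ∀ e ∈ Erem, ∀ v ∈ e, ∃ k, k ≤ m ∧ c k = v := by
    intro e he v hv
    obtain ⟨k, hk, -, rfl⟩ := (memRem e).mp he
    rcases Sym2.mem_iff.mp hv with rfl | rfl
    exacts [⟨k, by omega, rfl⟩, ⟨k+1, by omega, rfl⟩]
  -- every A-edge that meets the path is a removed edge
  have key : ∀ e ∈ A, ∀ k, k ≤ m → c k ∈ e → e ∈ Erem := by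
    intro e he k hk hke
    obtain ⟨u, rfl⟩ := Sym2.mem_iff_exists.mp hke
    have hpf : pfun A (c k) = some u := (pfun_eq_some_iff hA).mpr he
    have hk0 : k ≠ 0 := by
      rintro rfl
      exact h0 ⟨_, he, by simp⟩
    have hkm : k ≠ m := by
      rintro rfl
      exact hlast ⟨_, he, by simp⟩
    rcases Nat.mod_two_eq_zero_or_one k with hkp | hkp
    · -- k even, use edge k-1
      have h1 : k - 1 < m := by omega
      have h2 : (k-1) % 2 = 1 := by omega
      have hedge : s(c (k-1), c k) ∈ A := by
        have := (halt (k-1) h1).mpr h2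
        rwa [show k - 1 + 1 = k by omega] at this
      have : pfun A (c k) = some (c (k-1)) := by
        rw [pfun_eq_some_iff hA, Sym2.eq_swap]
        exact hedge
      rw [this] at hpf
      obtain rfl : c (k-1) = u := by simpa using hpf
      rw [memRem]
      exact ⟨k-1, h1, h2, by rw [Sym2.eq_swap, show k - 1 + 1 = k by omega]⟩
    · -- k odd, use edge k
      have h1 : k < m := by omega
      have hedge : s(c k, c (k+1)) ∈ A := (halt k h1).mpr hkp
      have : pfun A (c k) = some (c (k+1)) := (pfun_eq_some_iff hA).mpr hedge
      rw [this] at hpf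
      obtain rfl : c (k+1) = u := by simpa using hpf
      rw [memRem]
      exact ⟨k, h1, hkp, rfl⟩
  have hAddA : ∀ e ∈ Eadd, e ∉ A := by
    intro e he hea
    obtain ⟨k, hk, hk2, rfl⟩ := (memAdd e).mp he
    have := (halt k hk).mp hea
    omega
  refine ⟨(A \ ↑Erem) ∪ ↑Eadd, ⟨?_, ?_⟩, ?_, ?_, ?_⟩
  · -- subset of edgeSet
    rintro e (he | he)
    · exact hA.1 he.1
    · obtain ⟨k, hk, -, rfl⟩ := (memAdd e).mp he
      exact (G.mem_edgeSet).mpr (hadj k hk)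
  · -- pairwise disjoint
    rintro e (he | he) f (hf | hf) hne v hve hvf
    · exact hA.2 he.1 hf.1 hne v hve hvf
    · obtain ⟨k, hk, rfl⟩ := vtxAdd f hf v hvf
      exact he.2 (key e he.1 k hk hve)
    · obtain ⟨k, hk, rfl⟩ := vtxAdd e he v hve
      exact hf.2 (key f hf.1 k hk hvf)
    · obtain ⟨k, hk, hk2, rfl⟩ := (memAdd e).mp he
      obtain ⟨l, hl, hl2, rfl⟩ := (memAdd f).mp hf
      rcases Sym2.mem_iff.mp hve with rfl | rfl <;>
        rcases Sym2.mem_iff.mp hvf with h | h <;>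
        [skip; skip; skip; skip] <;>
      · first
        | (have := hinj _ _ (by omega) (by omega) h; omega)
        | (have := hinj _ _ (by omega) (by omega) h;
           exact hne (by rw [show k = l from by omega]))
  · -- cardinality
    have hfin : A.Finite := Set.toFinite A
    have hsub : (↑Erem : Set (Sym2 V)) ⊆ A := by
      intro e he
      obtain ⟨k, hk, hk2, rfl⟩ := (memRem e).mp (by simpa using he)
      exact (halt k hk).mpr hk2
    have hdisj : Disjoint (A \ ↑Erem) (↑Eadd : Set (Sym2 V)) := by
      rw [Set.disjoint_left]
      rintro e ⟨he, -⟩ hee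
      exact hAddA e (by simpa using hee) he
    have cAdd : Eadd.card = m / 2 + 1 := by
      rw [hEadd, Finset.card_image_of_injOn, (card_even_odd m).1]
      · omega
      · intro k hk l hl he
        simp only [Finset.coe_filter, Finset.mem_range, Set.mem_setOf_eq] at hk hl
        rcases Sym2.eq_iff.mp he with ⟨h1, -⟩ | ⟨h1, h2⟩
        · exact hinj _ _ (by omega) (by omega) h1
        · have := hinj _ _ (by omega) (by omega) h1
          have := hinj _ _ (by omega) (by omega) h2
          omega
    have cRem : Erem.card = m / 2 := by
      rw [hErem, Finset.card_image_of_injOn, (card_even_odd m).2]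
      intro k hk l hl he
      simp only [Finset.coe_filter, Finset.mem_range, Set.mem_setOf_eq] at hk hl
      rcases Sym2.eq_iff.mp he with ⟨h1, -⟩ | ⟨h1, h2⟩
      · exact hinj _ _ (by omega) (by omega) h1
      · have := hinj _ _ (by omega) (by omega) h1
        have := hinj _ _ (by omega) (by omega) h2
        omega
    have hremle : Erem.card ≤ A.ncard := by
      rw [← Set.ncard_coe_finset]
      exact Set.ncard_le_ncard hsub hfin
    rw [Set.ncard_union_eq hdisj hfin.diff (Finset.finite_toSet _),
      Set.ncard_diff hsub, Set.ncard_coe_finset, Set.ncard_coe_finset, cAdd, cRem]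
    omega
  · -- covered
    intro v
    constructor
    · rintro ⟨e, (he | he), hve⟩
      · exact Or.inl ⟨e, he.1, hve⟩
      · exact Or.inr (vtxAdd e (by simpa using he) v hve)
    · have hpath : ∀ k, k ≤ m → Covered ((A \ ↑Erem) ∪ ↑Eadd) (c k) := by
        intro k hk
        rcases Nat.mod_two_eq_zero_or_one k with hkp | hkp
        · have hklt : k < m := by omega
          refine ⟨s(c k, c (k+1)), Or.inr ?_, by simp⟩
          simp only [Finset.mem_coe]
          rw [memAdd]
          exact ⟨k, hklt, hkp, rfl⟩
        · have h1 : k - 1 < m := by omega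
          refine ⟨s(c (k-1), c (k-1+1)), Or.inr ?_, ?_⟩
          · simp only [Finset.mem_coe]
            rw [memAdd]
            exact ⟨k-1, h1, by omega, rfl⟩
          · rw [show k - 1 + 1 = k by omega]
            simp
      rintro (⟨e, he, hve⟩ | ⟨k, hk, rfl⟩)
      · by_cases hrem : e ∈ Erem
        · obtain ⟨k, hk, rfl⟩ := vtxRem e hrem v hve
          exact hpath k hk
        · exact ⟨e, Or.inl ⟨he, by simpa using hrem⟩, hve⟩
      · exact hpath k hk
  · -- untouched edges
    intro e hno
    constructor
    · rintro (he | he)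
      · exact he.1
      · obtain ⟨k, hk, -, rfl⟩ := (memAdd e).mp (by simpa using he)
        exact absurd (by simp : c k ∈ s(c k, c (k+1))) (hno k (by omega))
    · intro he
      left
      refine ⟨he, ?_⟩
      intro hrem
      obtain ⟨k, hk, -, rfl⟩ := (memRem e).mp (by simpa using hrem)
      exact absurd (by simp : c k ∈ s(c k, c (k+1))) (hno k (by omega))


variable {V : Type*} {G : SimpleGraph V}

/-- Convert a weight-1 multiset matching on an induced subgraph into a finite
set matching in the ambient graph. -/
theorem extract {s : Set V} (M₀ : Multiset (↥s × ↥s))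
    (h1 : ∀ e ∈ M₀, G.Adj e.1.1 e.2.1)
    (h2 : ∀ v : ↥s, (M₀.map Prod.fst).count v + (M₀.map Prod.snd).count v ≤ 1) :
    ∃ S : Finset (Sym2 V), IsSMatching G ↑S ∧ S.card = Multiset.card M₀ ∧
      ∀ e ∈ S, ∀ v, v ∈ e → v ∈ s := by
  classical
  have hA : ∀ e ∈ M₀, ∀ f ∈ M₀, e.1 ≠ f.2 := by
    intro e he f hf hef
    have c1 : 1 ≤ (M₀.map Prod.fst).count e.1 :=
      Multiset.one_le_count_iff_mem.mpr (Multiset.mem_map.mpr ⟨e, he, rfl⟩)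
    have c2 : 1 ≤ (M₀.map Prod.snd).count e.1 := by
      refine Multiset.one_le_count_iff_mem.mpr (Multiset.mem_map.mpr ⟨f, hf, ?_⟩)
      exact hef.symm
    have := h2 e.1
    omega
  have hnd : M₀.Nodup := by
    rw [Multiset.nodup_iff_count_le_one]
    intro e
    by_contra hc
    push_neg at hc
    have hcnt : 2 ≤ M₀.count e := hc
    have hle : M₀.count e ≤ (M₀.map Prod.fst).count e.1 := by
      rw [Multiset.count_map]
      calc M₀.count e = Multiset.card (M₀.filter (fun a => e = a)) := by
            rw [Multiset.count]; rw [Multiset.countP_eq_card_filter]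
        _ ≤ Multiset.card (M₀.filter (fun a => e.1 = a.1)) := by
            apply Multiset.card_le_card
            apply Multiset.monotone_filter_right
            rintro a rfl; rfl
    have := h2 e.1
    omega
  have hB1 : ∀ e ∈ M₀, ∀ f ∈ M₀, e ≠ f → e.1 ≠ f.1 := by
    intro e he f hf hne hef
    have hcnt : 2 ≤ (M₀.map Prod.fst).count e.1 := by
      rw [Multiset.count_map]
      have hnd' : (M₀.filter (fun a => e.1 = a.1)).Nodup := hnd.filter _
      have hsub : ({e, f} : Finset (↥s × ↥s)) ⊆ (M₀.filter (fun a => e.1 = a.1)).toFinset := by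
        intro x hx
        rw [Multiset.mem_toFinset, Multiset.mem_filter]
        rcases Finset.mem_insert.mp hx with rfl | hx
        · exact ⟨he, rfl⟩
        · rw [Finset.mem_singleton] at hx
          subst hx
          exact ⟨hf, hef⟩
      calc (2 : ℕ) = ({e, f} : Finset (↥s × ↥s)).card := (Finset.card_pair hne).symm
        _ ≤ (M₀.filter (fun a => e.1 = a.1)).toFinset.card := Finset.card_le_card hsub
        _ = Multiset.card (M₀.filter (fun a => e.1 = a.1)) :=
            Multiset.toFinset_card_eq_card_iff_nodup.mpr hnd'
    have := h2 e.1
    omega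
  have hB2 : ∀ e ∈ M₀, ∀ f ∈ M₀, e ≠ f → e.2 ≠ f.2 := by
    intro e he f hf hne hef
    have hcnt : 2 ≤ (M₀.map Prod.snd).count e.2 := by
      rw [Multiset.count_map]
      have hnd' : (M₀.filter (fun a => e.2 = a.2)).Nodup := hnd.filter _
      have hsub : ({e, f} : Finset (↥s × ↥s)) ⊆ (M₀.filter (fun a => e.2 = a.2)).toFinset := by
        intro x hx
        rw [Multiset.mem_toFinset, Multiset.mem_filter]
        rcases Finset.mem_insert.mp hx with rfl | hx
        · exact ⟨he, rfl⟩
        · rw [Finset.mem_singleton] at hx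
          subst hx
          exact ⟨hf, hef⟩
      calc (2 : ℕ) = ({e, f} : Finset (↥s × ↥s)).card := (Finset.card_pair hne).symm
        _ ≤ (M₀.filter (fun a => e.2 = a.2)).toFinset.card := Finset.card_le_card hsub
        _ = Multiset.card (M₀.filter (fun a => e.2 = a.2)) :=
            Multiset.toFinset_card_eq_card_iff_nodup.mpr hnd'
    have := h2 e.2
    omega
  refine ⟨M₀.toFinset.image (fun e => s(e.1.1, e.2.1)), ⟨?_, ?_⟩, ?_, ?_⟩
  · rintro x hx
    simp only [Finset.coe_image, Set.mem_image, Finset.mem_coe, Multiset.mem_toFinset] at hx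
    obtain ⟨e, he, rfl⟩ := hx
    exact (G.mem_edgeSet).mpr (h1 e he)
  · rintro x hx y hy hne v hvx hvy
    simp only [Finset.coe_image, Set.mem_image, Finset.mem_coe, Multiset.mem_toFinset] at hx hy
    obtain ⟨e, he, rfl⟩ := hx
    obtain ⟨f, hf, rfl⟩ := hy
    have hef : e ≠ f := fun h => hne (by rw [h])
    rcases Sym2.mem_iff.mp hvx with rfl | rfl <;> rcases Sym2.mem_iff.mp hvy with h | h
    · exact hB1 e he f hf hef (Subtype.val_injective h)
    · exact hA e he f hf (Subtype.val_injective h)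
    · exact hA f hf e he (Subtype.val_injective h.symm)
    · exact hB2 e he f hf hef (Subtype.val_injective h)
  · rw [Finset.card_image_of_injOn, Multiset.toFinset_card_eq_card_iff_nodup.mpr hnd]
    intro e he f hf hef
    simp only [Finset.mem_coe, Multiset.mem_toFinset] at he hf
    rcases Sym2.eq_iff.mp hef with ⟨ha, hb⟩ | ⟨ha, hb⟩
    · exact Prod.ext (Subtype.val_injective ha) (Subtype.val_injective hb)
    · exact absurd (Subtype.val_injective ha) (hA e he f hf)
  · intro x hx v hv
    simp only [Finset.mem_image, Multiset.mem_toFinset] at hx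
    obtain ⟨e, he, rfl⟩ := hx
    rcases Sym2.mem_iff.mp hv with rfl | rfl
    exacts [e.1.2, e.2.2]

/-- Build a walk from an indexed family of adjacent vertices. -/
def walkOfFn (G : SimpleGraph V) (c : ℕ → V) :
    (n : ℕ) → (∀ k, k < n → G.Adj (c k) (c (k+1))) → G.Walk (c 0) (c n)
  | 0, _ => SimpleGraph.Walk.nil
  | n+1, h => (walkOfFn G c n (fun k hk => h k (by omega))).concat (h n (by omega))

theorem walkOfFn_length (c : ℕ → V) (n : ℕ) (h : ∀ k, k < n → G.Adj (c k) (c (k+1))) :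
    (walkOfFn G c n h).length = n := by
  induction n with
  | zero => rfl
  | succ n ih => rw [walkOfFn, SimpleGraph.Walk.length_concat, ih]

theorem walkOfFn_edges (c : ℕ → V) (n : ℕ) (h : ∀ k, k < n → G.Adj (c k) (c (k+1))) :
    (walkOfFn G c n h).edges = (List.range n).map (fun k => s(c k, c (k+1))) := by
  induction n with
  | zero => rfl
  | succ n ih => rw [walkOfFn, SimpleGraph.Walk.edges_concat, ih, List.range_succ, List.map_append, List.concat_eq_append]; rfl


theorem count_congr {α : Type*} {i1 i2 : DecidableEq α} (a : α) (m : Multiset α) :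
    @Multiset.count α i1 a m = @Multiset.count α i2 a m := by
  rw [Subsingleton.elim i1 i2]

end AugAux

/-- In a `t`-saturating graph ... -/
theorem exists_augCycle {V : Type*} [Fintype V] (G : SimpleGraph V) (t : ℕ)
    (hsat : IsTSat G (fun _ => 1) t) (hnu : wNu G (fun _ => 1) = t - 1)
    (M : Set (Sym2 V)) (hM : IsSMatching G M)
    (hMmax : ∀ M' : Set (Sym2 V), IsSMatching G M' → M'.ncard ≤ M.ncard)
    (hMcard : M.ncard = t - 1)
    (i : V) (hi : ¬ Covered M i) :
    ∃ p : G.Walk i i, IsAugCycle G M p := by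
  classical
  open AugAux in
  obtain ⟨hlt, hcond⟩ := hsat
  have ht1 : 1 ≤ t := by omega
  have hbound : ∀ A : Set (Sym2 V), IsSMatching G A → A.ncard ≤ t - 1 := by
    intro A hA
    have := hMmax A hA
    omega
  set NB : Finset V := Finset.univ.filter (fun j => G.Adj i j) with hNB
  have hNBmem : ∀ j, j ∈ NB ↔ G.Adj i j := by
    intro j; simp [hNB]
  have hdeg : wDeg G (fun _ => 1) i = NB.card := by
    simp [wDeg, hNB]
  set s : Set V := {v | ¬ G.Adj i v} with hs
  -- extract a large matching avoiding the neighborhood of i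
  have hwnu : t - NB.card ≤ wNu (G.induce s) (fun v => 1) := by
    have := hcond i
    rwa [hdeg] at this
  obtain ⟨M₀, hM₀, hM₀card⟩ :
      ∃ M₀ : Multiset (↥s × ↥s), IsWMatching (G.induce s) (fun v => (1:ℕ)) M₀ ∧
        Multiset.card M₀ = wNu (G.induce s) (fun v => 1) := by
    have hmem : wNu (G.induce s) (fun v => (1:ℕ)) ∈
        {n | ∃ M₀ : Multiset (↥s × ↥s),
          IsWMatching (G.induce s) (fun v => (1:ℕ)) M₀ ∧ Multiset.card M₀ = n} := by
      rw [wNu]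
      apply Nat.sSup_mem
      · exact ⟨0, 0, ⟨fun e he => absurd he (Multiset.notMem_zero e), fun v => by simp⟩, rfl⟩
      · refine ⟨Fintype.card ↥s, ?_⟩
        rintro n ⟨M₁, hM₁, rfl⟩
        have hnd : (M₁.map Prod.fst).Nodup := by
          rw [Multiset.nodup_iff_count_le_one]
          intro a
          have h2a : (M₁.map Prod.fst).count a + (M₁.map Prod.snd).count a ≤ 1 := by
            have h := hM₁.2 a
            simp only [AugAux.count_congr (i2 := fun a b => Classical.propDecidable (a = b))]
            exact h
          omega
        calc Multiset.card M₁ = Multiset.card (M₁.map Prod.fst) := (Multiset.card_map _ _).symm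
          _ = (M₁.map Prod.fst).toFinset.card :=
              (Multiset.toFinset_card_eq_card_iff_nodup.mpr hnd).symm
          _ ≤ Fintype.card ↥s := Finset.card_le_univ _
    exact hmem
  have hM₀2 : ∀ v : ↥s, (M₀.map Prod.fst).count v + (M₀.map Prod.snd).count v ≤ 1 := by
    intro v
    have h := hM₀.2 v
    simp only [AugAux.count_congr (i2 := fun a b => Classical.propDecidable (a = b))]
    exact h
  obtain ⟨S'', hS''match, hS''card, hS''avoid⟩ :=
    AugAux.extract (G := G) M₀ (fun e he => hM₀.1 e he) hM₀2
  set M'' : Set (Sym2 V) := ↑S'' with hM''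
  have hM''match : IsSMatching G M'' := hS''match
  have hM''card : t - NB.card ≤ M''.ncard := by
    rw [hM'', Set.ncard_coe_finset, hS''card, hM₀card]
    exact hwnu
  have hM''avoid : ∀ e ∈ M'', ∀ v, v ∈ e → ¬ G.Adj i v := by
    intro e he v hv
    exact hS''avoid e (by simpa [hM''] using he) v hv
  have hM''nocov : ∀ v, G.Adj i v → ¬ Covered M'' v := by
    rintro v hv ⟨e, he, hve⟩
    exact hM''avoid e he v hve hv
  have hM''nocovi : ¬ Covered M'' i := by
    rintro ⟨e, he, hie⟩
    obtain ⟨u, rfl⟩ := Sym2.mem_iff_exists.mp hie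
    have hadj : G.Adj i u := by simpa using hM''match.1 he
    exact hM''avoid _ he u (by simp) hadj
  -- partner functions
  set p : V → Option V := AugAux.pfun M with hp
  set q : V → Option V := AugAux.pfun M'' with hq
  have hps : ∀ v u, p v = some u → p u = some v := fun v u h => AugAux.pfun_symm hM h
  have hqs : ∀ v u, q v = some u → q u = some v := fun v u h => AugAux.pfun_symm hM''match h
  have hpi : ∀ v, p v ≠ some v := fun v => AugAux.pfun_ne_self hM
  have hqi : ∀ v, q v ≠ some v := fun v => AugAux.pfun_ne_self hM''match
  have hpnone : p i = none := AugAux.pfun_eq_none_iff.mpr hi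
  have hqnone : q i = none := AugAux.pfun_eq_none_iff.mpr hM''nocovi
  have hqNB : ∀ j ∈ NB, q j = none := by
    intro j hj
    exact AugAux.pfun_eq_none_iff.mpr (hM''nocov j ((hNBmem j).mp hj))
  -- chains
  set X : V → ℕ → Option V := fun j n => AugAux.alt p q n j with hX
  have hterm : ∀ j ∈ NB, ∃ n, X j n = none := by
    intro j hj
    by_contra hno
    push_neg at hno
    set f : Fin (Fintype.card V + 1) → V := fun k => (X j k).getD j with hf
    have hfinj : Function.Injective f := by
      intro k l hkl
      obtain ⟨a, ha⟩ := Option.ne_none_iff_exists'.mp (hno k)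
      obtain ⟨b, hb⟩ := Option.ne_none_iff_exists'.mp (hno l)
      have : a = b := by
        have h1 : f k = a := by rw [hf]; simp only; rw [ha]; rfl
        have h2 : f l = b := by rw [hf]; simp only; rw [hb]; rfl
        rw [h1, h2] at hkl; exact hkl
      subst this
      rcases lt_trichotomy (k : ℕ) (l : ℕ) with h | h | h
      · exact absurd (AugAux.alt_inj hps hqs hpi hqi (hqNB j hj) l k a h ha hb) (fun x => x)
      · exact Fin.ext h
      · exact absurd (AugAux.alt_inj hps hqs hpi hqi (hqNB j hj) k l a h hb ha) (fun x => x)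
    have := Fintype.card_le_of_injective f hfinj
    simp at this
  set N : V → ℕ := fun j => if h : ∃ n, X j n = none then Nat.find h else 0 with hN
  set chv : V → ℕ → V := fun j n => (X j n).getD j with hchv
  have hNspec : ∀ j ∈ NB, X j (N j) = none ∧ ∀ k, k < N j → X j k ≠ none := by
    intro j hj
    have h := hterm j hj
    constructor
    · rw [hN]; simp only; rw [dif_pos h]; exact Nat.find_spec h
    · intro k hk
      rw [hN] at hk; simp only at hk; rw [dif_pos h] at hk
      exact Nat.find_min h hk
  have hsome : ∀ j ∈ NB, ∀ k, k < N j → X j k = some (chv j k) := by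
    intro j hj k hk
    obtain ⟨a, ha⟩ := Option.ne_none_iff_exists'.mp ((hNspec j hj).2 k hk)
    rw [hchv]; simp only; rw [ha]; rfl
  have hN1 : ∀ j ∈ NB, 1 ≤ N j := by
    intro j hj
    by_contra h
    have h0 : N j = 0 := by omega
    have := (hNspec j hj).1
    rw [h0] at this
    simp [hX, AugAux.alt] at this
  have hchv0 : ∀ j, chv j 0 = j := by
    intro j; rw [hchv]; simp [hX, AugAux.alt]
  have hstep : ∀ j ∈ NB, ∀ k, k + 1 < N j →
      AugAux.tau p q k (chv j k) = some (chv j (k+1)) := by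
    intro j hj k hk
    have h1 := hsome j hj k (by omega)
    have h2 := hsome j hj (k+1) hk
    rw [hX] at h1 h2
    simp only at h1 h2
    rw [AugAux.alt_succ' p q k j, h1] at h2
    simpa using h2
  have hlastnone : ∀ j ∈ NB, AugAux.tau p q (N j - 1) (chv j (N j - 1)) = none := by
    intro j hj
    have h1 := hsome j hj (N j - 1) (by have := hN1 j hj; omega)
    have h2 := (hNspec j hj).1
    have he : N j = (N j - 1) + 1 := by have := hN1 j hj; omega
    rw [he] at h2
    rw [hX] at h1 h2
    simp only at h1 h2
    rw [AugAux.alt_succ' p q _ j, h1] at h2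
    simpa using h2
  have hinj : ∀ j ∈ NB, ∀ k l, k < N j → l < N j → chv j k = chv j l → k = l := by
    intro j hj k l hk hl hkl
    rcases lt_trichotomy k l with h | h | h
    · exfalso
      refine AugAux.alt_inj hps hqs hpi hqi (hqNB j hj) l k (chv j k) h ?_ ?_
      · exact hsome j hj k hk
      · rw [hkl]; exact hsome j hj l hl
    · exact h
    · exfalso
      refine AugAux.alt_inj hps hqs hpi hqi (hqNB j hj) k l (chv j k) h ?_ ?_
      · rw [hkl]; exact hsome j hj l hl
      · exact hsome j hj k hk
  have hnoti : ∀ j ∈ NB, ∀ k, k < N j → chv j k ≠ i := by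
    intro j hj k hk heq
    rcases Nat.eq_zero_or_pos k with rfl | hk0
    · rw [hchv0] at heq
      exact G.irrefl (heq ▸ (hNBmem j).mp hj)
    · obtain ⟨k', rfl⟩ : ∃ k', k = k' + 1 := ⟨k - 1, by omega⟩
      have h := hstep j hj k' hk
      rw [heq] at h
      have h2 : AugAux.tau p q k' i = some (chv j k') :=
        AugAux.tau_symm hps hqs h
      unfold AugAux.tau at h2
      split_ifs at h2 <;> simp [hpnone, hqnone] at h2
  have hchadj : ∀ j ∈ NB, ∀ k, k + 1 < N j → G.Adj (chv j k) (chv j (k+1)) := by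
    intro j hj k hk
    have h := hstep j hj k hk
    unfold AugAux.tau at h
    split_ifs at h
    · exact AugAux.pfun_adj hM h
    · exact AugAux.pfun_adj hM''match h
  have hedgeM : ∀ j ∈ NB, ∀ k, k + 1 < N j →
      (s(chv j k, chv j (k+1)) ∈ M ↔ k % 2 = 0) := by
    intro j hj k hk
    constructor
    · intro hmem
      by_contra hpar
      have hpar1 : k % 2 = 1 := by omega
      have hk1 : 1 ≤ k := by omega
      have h1 : p (chv j k) = some (chv j (k+1)) := (AugAux.pfun_eq_some_iff hM).mpr hmem
      have h2 := hstep j hj (k-1) (by omega)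
      rw [show k - 1 + 1 = k by omega] at h2
      unfold AugAux.tau at h2
      rw [if_pos (by omega)] at h2
      have h3 : p (chv j k) = some (chv j (k-1)) := hps _ _ h2
      rw [h1] at h3
      have h4 : chv j (k+1) = chv j (k-1) := by simpa using h3
      have := hinj j hj (k+1) (k-1) hk (by omega) h4
      omega
    · intro hpar
      have h := hstep j hj k hk
      unfold AugAux.tau at h
      rw [if_pos hpar] at h
      exact (AugAux.pfun_eq_some_iff hM).mp h
  have hedgeM'' : ∀ j ∈ NB, ∀ k, k + 1 < N j →
      (s(chv j k, chv j (k+1)) ∈ M'' ↔ k % 2 = 1) := by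
    intro j hj k hk
    constructor
    · intro hmem
      by_contra hpar
      have hpar0 : k % 2 = 0 := by omega
      have h1 : q (chv j k) = some (chv j (k+1)) := (AugAux.pfun_eq_some_iff hM''match).mpr hmem
      rcases Nat.eq_zero_or_pos k with rfl | hk0
      · rw [hchv0] at h1
        rw [hqNB j hj] at h1
        simp at h1
      · have h2 := hstep j hj (k-1) (by omega)
        rw [show k - 1 + 1 = k by omega] at h2
        unfold AugAux.tau at h2
        rw [if_neg (by omega)] at h2
        have h3 : q (chv j k) = some (chv j (k-1)) := hqs _ _ h2
        rw [h1] at h3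
        have h4 : chv j (k+1) = chv j (k-1) := by simpa using h3
        have := hinj j hj (k+1) (k-1) hk (by omega) h4
        omega
    · intro hpar
      have h := hstep j hj k hk
      unfold AugAux.tau at h
      rw [if_neg (by omega)] at h
      exact (AugAux.pfun_eq_some_iff hM''match).mp h
  -- no chain ends with an unmatched (w.r.t. M) vertex: otherwise augment M
  have hodd : ∀ j ∈ NB, (N j - 1) % 2 = 1 := by
    intro j hj
    by_contra hpar
    have hev : (N j - 1) % 2 = 0 := by omega
    have hN1j := hN1 j hj
    set c : ℕ → V := fun k => if k = 0 then i else chv j (k-1) with hc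
    have hc0 : c 0 = i := by simp [hc]
    have hcs : ∀ k, 1 ≤ k → c k = chv j (k-1) := by
      intro k hk; rw [hc]; simp only; rw [if_neg (by omega)]
    obtain ⟨A', hA', hA'card, -, -⟩ :=
      AugAux.augSwap (G := G) hM (m := N j) (c := c) (by omega)
        (by -- injectivity
          intro k l hk hl hkl
          rcases Nat.eq_zero_or_pos k with rfl | hk0 <;> rcases Nat.eq_zero_or_pos l with rfl | hl0
          · rfl
          · rw [hc0, hcs l hl0] at hkl
            exact absurd hkl.symm (hnoti j hj (l-1) (by omega))
          · rw [hc0, hcs k hk0] at hkl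
            exact absurd hkl (hnoti j hj (k-1) (by omega))
          · rw [hcs k hk0, hcs l hl0] at hkl
            have := hinj j hj (k-1) (l-1) (by omega) (by omega) hkl
            omega)
        (by -- adjacency
          intro k hk
          rcases Nat.eq_zero_or_pos k with rfl | hk0
          · rw [hc0, hcs 1 le_rfl]
            simpa [hchv0] using (hNBmem j).mp hj
          · rw [hcs k hk0, hcs (k+1) (by omega)]
            simp only [Nat.add_sub_cancel]
            have := hchadj j hj (k-1) (by omega)
            rwa [show k - 1 + 1 = k by omega] at this)
        (by -- alternation
          intro k hk
          rcases Nat.eq_zero_or_pos k with rfl | hk0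
          · rw [hc0, hcs 1 le_rfl]
            simp only [Nat.zero_mod]
            constructor
            · intro hmem
              exact absurd ⟨_, hmem, by simp⟩ hi
            · omega
          · rw [hcs k hk0, hcs (k+1) (by omega)]
            simp only [Nat.add_sub_cancel]
            have := hedgeM j hj (k-1) (by omega)
            rw [show k - 1 + 1 = k by omega] at this
            rw [this]
            omega)
        (by rw [hc0]; exact hi)
        (by -- last vertex M-unsaturated
          rw [hcs (N j) (by omega)]
          have h := hlastnone j hj
          unfold AugAux.tau at h
          rw [if_pos hev] at h
          exact AugAux.pfun_eq_none_iff.mp h)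
    have := hbound A' hA'
    rw [hA'card, hMcard] at this
    omega
    -- main case split
  by_cases hwin : ∃ j ∈ NB, G.Adj i (chv j (N j - 1))
  · -- WIN: construct the augmenting closed walk
    obtain ⟨j, hj, hfar⟩ := hwin
    have hN1j := hN1 j hj
    have hoddj := hodd j hj
    set e := N j - 1 with he
    have he1 : 1 ≤ e := by omega
    have heodd : e % 2 = 1 := hoddj
    have heN : N j = e + 1 := by omega
    set c : ℕ → V := fun k => if k = 0 then i else if k ≤ e + 1 then chv j (k-1) else i with hc
    have hc0 : c 0 = i := by simp [hc]
    have hcs : ∀ k, 1 ≤ k → k ≤ e + 1 → c k = chv j (k-1) := by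
      intro k h1 h2; rw [hc]; simp only; rw [if_neg (by omega), if_pos h2]
    have hctop : c (e+2) = i := by
      rw [hc]; simp only; rw [if_neg (by omega), if_neg (by omega)]
    have hadjc : ∀ k, k < e + 2 → G.Adj (c k) (c (k+1)) := by
      intro k hk
      rcases Nat.eq_zero_or_pos k with rfl | hk0
      · rw [hc0, hcs 1 le_rfl (by omega)]
        simpa [hchv0] using (hNBmem j).mp hj
      · rcases eq_or_lt_of_le (show k ≤ e + 1 by omega) with rfl | hklt
        · rw [hcs (e+1) (by omega) le_rfl, hctop]
          simp only [Nat.add_sub_cancel]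
          exact hfar.symm
        · rw [hcs k hk0 (by omega), hcs (k+1) (by omega) (by omega)]
          simp only [Nat.add_sub_cancel]
          have := hchadj j hj (k-1) (by omega)
          rwa [show k - 1 + 1 = k by omega] at this
    refine ⟨(AugAux.walkOfFn G c (e+2) hadjc).copy hc0 hctop, ?_, ?_⟩
    · rw [SimpleGraph.Walk.length_copy, AugAux.walkOfFn_length]
      exact Nat.odd_iff.mpr (by omega)
    · intro k hk
      have hk2 : k < e + 2 := by
        simpa [SimpleGraph.Walk.edges_copy, AugAux.walkOfFn_edges] using hk
      have hedval : (((AugAux.walkOfFn G c (e+2) hadjc).copy hc0 hctop).edges.get ⟨k, hk⟩)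
          = s(c k, c (k+1)) := by
        simp only [SimpleGraph.Walk.edges_copy, AugAux.walkOfFn_edges, List.get_eq_getElem,
          List.getElem_map, List.getElem_range]
      rw [hedval]
      rcases Nat.eq_zero_or_pos k with rfl | hk0
      · rw [hc0, hcs 1 le_rfl (by omega)]
        simp only [Nat.zero_mod]
        constructor
        · intro hmem
          exact absurd ⟨_, hmem, by simp⟩ hi
        · omega
      · rcases eq_or_lt_of_le (show k ≤ e + 1 by omega) with rfl | hklt
        · rw [hcs (e+1) (by omega) le_rfl, hctop]
          constructor
          · intro hmem
            exact absurd ⟨_, hmem, by simp⟩ hi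
          · omega
        · rw [hcs k hk0 (by omega), hcs (k+1) (by omega) (by omega)]
          simp only [Nat.add_sub_cancel]
          have hM1 := hedgeM j hj (k-1) (by omega)
          rw [show k - 1 + 1 = k by omega] at hM1
          rw [hM1]
          omega
  · -- no chain ends next to i : contradiction
    exfalso
    push_neg at hwin
    have hhit : ∀ j ∈ NB, ∀ j' ∈ NB, j ≠ j' → ∀ r, X j r = some j' → False := by
      intro j hj j' hj' hne r hr
      have hrlt : r < N j := by
        by_contra hge
        push_neg at hge
        obtain ⟨b, hb⟩ := AugAux.alt_mono p q hge (by rw [hX] at hr; simp only at hr; rw [hr]; simp)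
        have hnone : AugAux.alt p q (N j) j = none := (hNspec j hj).1
        rw [hnone] at hb
        simp at hb
      have hchvr : chv j r = j' := by
        have h1 := hsome j hj r hrlt
        rw [hr] at h1
        exact (Option.some_injective _ h1).symm
      rcases Nat.eq_zero_or_pos r with rfl | hr0
      · rw [hchv0] at hchvr
        exact hne hchvr
      rcases Nat.mod_two_eq_zero_or_one r with hre | hro
      · -- r even ≥ 2 : j' would be M''-covered
        have h2 := hstep j hj (r-1) (by omega)
        rw [show r - 1 + 1 = r by omega, hchvr] at h2
        unfold AugAux.tau at h2
        rw [if_neg (by omega)] at h2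
        have h3 := hqs _ _ h2
        rw [hqNB j' hj'] at h3
        simp at h3
      · -- r odd : r = N j - 1, contradicting hwin
        have hrend : r = N j - 1 := by
          by_contra hrne
          have hr1 : r + 1 < N j := by omega
          have h2 := hstep j hj r hr1
          unfold AugAux.tau at h2
          rw [if_neg (by omega), hchvr, hqNB j' hj'] at h2
          simp at h2
        refine hwin j hj ?_
        rw [hrend] at hchvr
        rw [hchvr]
        exact (hNBmem j').mp hj'
    have hdisj : ∀ j ∈ NB, ∀ j' ∈ NB, j ≠ j' →
        ∀ k l, k < N j → l < N j' → chv j k ≠ chv j' l := by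
      intro j hj j' hj' hne k l hk hl heq
      have h1 := hsome j hj k hk
      have h2 := hsome j' hj' l hl
      rw [heq] at h1
      rcases AugAux.alt_meet hps hqs l k (chv j' l) h1 h2 with ⟨r, hr⟩ | ⟨r, hr⟩
      · exact hhit j hj j' hj' hne r hr
      · exact hhit j' hj' j hj (Ne.symm hne) r hr
    -- iterated augmentation over all neighbours of i
    have iter : ∀ L : List V, L.Nodup → (∀ j ∈ L, j ∈ NB) →
        ∃ A : Set (Sym2 V), IsSMatching G A ∧ A.ncard = M''.ncard + L.length ∧
          (∀ v, Covered A v ↔ (Covered M'' v ∨ ∃ j ∈ L, ∃ k, k < N j ∧ chv j k = v)) ∧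
          (∀ e : Sym2 V, (∀ w, w ∈ e → ¬ ∃ j ∈ L, ∃ k, k < N j ∧ chv j k = w) →
            (e ∈ A ↔ e ∈ M'')) := by
      intro L
      induction L with
      | nil =>
        intro _ _
        exact ⟨M'', hM''match, by simp, fun v => by simp, fun e _ => by simp⟩
      | cons j L ih =>
        intro hnd hmem
        obtain ⟨A, hA, hAcard, hAcov, hApres⟩ :=
          ih (List.Nodup.of_cons hnd) (fun x hx => hmem x (List.mem_cons_of_mem _ hx))
        have hjNB : j ∈ NB := hmem j (List.mem_cons_self)
        have hjL : j ∉ L := (List.nodup_cons.mp hnd).1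
        have hN1j := hN1 j hjNB
        have hoddj := hodd j hjNB
        have notTouched : ∀ k, k < N j →
            ¬ ∃ j' ∈ L, ∃ l, l < N j' ∧ chv j' l = chv j k := by
          rintro k hk ⟨j', hj'L, l, hl, heq⟩
          have hj'NB : j' ∈ NB := hmem j' (List.mem_cons_of_mem _ hj'L)
          have hne : j' ≠ j := fun h => hjL (h ▸ hj'L)
          exact hdisj j' hj'NB j hjNB hne l k hl hk heq
        obtain ⟨A', hA', hA'card, hA'cov, hA'pres⟩ :=
          AugAux.augSwap (G := G) hA (m := N j - 1) (c := chv j) hoddj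
            (fun k l hk hl hkl => hinj j hjNB k l (by omega) (by omega) hkl)
            (fun k hk => hchadj j hjNB k (by omega))
            (by
              intro k hk
              rw [hApres _ ?_]
              · exact hedgeM'' j hjNB k (by omega)
              · intro w hw hex
                rcases Sym2.mem_iff.mp hw with rfl | rfl
                · exact notTouched k (by omega) hex
                · exact notTouched (k+1) (by omega) hex)
            (by
              rw [hAcov]
              rintro (hcov | ⟨j', hj', l, hl, heq⟩)
              · rw [hchv0] at hcov
                exact hM''nocov j ((hNBmem j).mp hjNB) hcov
              · exact notTouched 0 (by omega) ⟨j', hj', l, hl, heq⟩)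
            (by
              rw [hAcov]
              rintro (hcov | ⟨j', hj', l, hl, heq⟩)
              · have h := hlastnone j hjNB
                unfold AugAux.tau at h
                rw [if_neg (by omega)] at h
                exact (AugAux.pfun_eq_none_iff.mp h) hcov
              · exact notTouched (N j - 1) (by omega) ⟨j', hj', l, hl, heq⟩)
        refine ⟨A', hA', ?_, ?_, ?_⟩
        · rw [hA'card, hAcard, List.length_cons]
          omega
        · intro v
          rw [hA'cov, hAcov]
          constructor
          · rintro ((hv | ⟨j', hj', l, hl, hlv⟩) | ⟨k, hk, hkv⟩)
            · exact Or.inl hv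
            · exact Or.inr ⟨j', List.mem_cons_of_mem _ hj', l, hl, hlv⟩
            · exact Or.inr ⟨j, List.mem_cons_self, k, by omega, hkv⟩
          · rintro (hv | ⟨j', hj', l, hl, hlv⟩)
            · exact Or.inl (Or.inl hv)
            · rcases List.mem_cons.mp hj' with rfl | hj'L
              · exact Or.inr ⟨l, by omega, hlv⟩
              · exact Or.inl (Or.inr ⟨j', hj'L, l, hl, hlv⟩)
        · intro f hf
          rw [hA'pres f ?_, hApres f ?_]
          · intro w hw hex
            obtain ⟨j', hj', l, hl, hlw⟩ := hex
            exact hf w hw ⟨j', List.mem_cons_of_mem _ hj', l, hl, hlw⟩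
          · intro k hk hkf
            exact hf (chv j k) hkf ⟨j, List.mem_cons_self, k, by omega, rfl⟩
    obtain ⟨A, hA, hAcard, -, -⟩ :=
      iter NB.toList NB.nodup_toList (fun j hj => (Finset.mem_toList).mp hj)
    have h1 := hbound A hA
    rw [hAcard, Finset.length_toList] at h1
    omega
end

section
/- If Γ is a t-saturating simple graph, then every vertex i of Γ satisfies deg_Γ(i) ≥ t − ν(Γ) + 1; in particular, if ν(Γ) = t − 1 then every vertex has degree at least 2. -/
open scoped Classical

section Aux

variable {V : Type*} [Fintype V] (G : SimpleGraph V)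

lemma sum_count_eq (s : Multiset V) : ∑ v : V, s.count v = Multiset.card s := by
  rw [← Multiset.toFinset_sum_count_eq]
  exact (Finset.sum_subset (Finset.subset_univ _) (fun x _ hx => by
    simp [Multiset.count_eq_zero_of_notMem (by simpa using hx)])).symm

lemma wmatching_card_le {M : Multiset (V × V)} (hM : IsWMatching G (fun _ => 1) M) :
    Multiset.card M ≤ Fintype.card V := by
  have h := Finset.sum_le_sum (s := Finset.univ) (fun v _ => hM.2 v)
  rw [Finset.sum_add_distrib, sum_count_eq, sum_count_eq, Multiset.card_map,
    Multiset.card_map] at h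
  simp only [Finset.sum_const, Finset.card_univ, smul_eq_mul, mul_one] at h
  omega

lemma wnu_nonempty : {n | ∃ M : Multiset (V × V), IsWMatching G (fun _ => 1) M ∧
    Multiset.card M = n}.Nonempty :=
  ⟨0, 0, ⟨by simp, by simp⟩, rfl⟩

lemma wnu_bddAbove : BddAbove {n | ∃ M : Multiset (V × V), IsWMatching G (fun _ => 1) M ∧
    Multiset.card M = n} :=
  ⟨Fintype.card V, fun n ⟨M, hM, hc⟩ => hc ▸ wmatching_card_le G hM⟩

lemma le_wnu {M : Multiset (V × V)} (hM : IsWMatching G (fun _ => 1) M) :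
    Multiset.card M ≤ wNu G (fun _ => 1) :=
  le_csSup (wnu_bddAbove G) ⟨M, hM, rfl⟩

lemma exists_max_wmatching : ∃ M : Multiset (V × V), IsWMatching G (fun _ => 1) M ∧
    Multiset.card M = wNu G (fun _ => 1) :=
  Nat.sSup_mem (wnu_nonempty G) (wnu_bddAbove G)

end Aux

/-- In a `t`-saturating simple graph every vertex has degree at least `t − ν + 1`;
in particular if `ν = t − 1` every vertex has degree at least 2. -/
theorem degree_ge_of_tSat {V : Type*} [Fintype V] (G : SimpleGraph V) (t : ℕ)
    (hsat : IsTSat G (fun _ => 1) t) :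
    (∀ i : V, t - wNu G (fun _ => 1) + 1 ≤ wDeg G (fun _ => 1) i) ∧
    (wNu G (fun _ => 1) = t - 1 → ∀ i : V, 2 ≤ wDeg G (fun _ => 1) i) := by
  have hlt := hsat.1
  have main : ∀ i : V, t - wNu G (fun _ => 1) + 1 ≤ wDeg G (fun _ => 1) i := by
    intro i
    set S : Set V := {v | ¬ G.Adj i v} with hS
    -- a maximum matching of the induced graph
    obtain ⟨M', hM', hcard⟩ := exists_max_wmatching (G.induce S)
    have hsat2 : t - wDeg G (fun _ => 1) i ≤ Multiset.card M' := by
      rw [hcard]; exact hsat.2 i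
    -- push it forward to G
    set N : Multiset (V × V) := M'.map (fun e => (e.1.1, e.2.1)) with hN
    have hNadj : ∀ e ∈ N, G.Adj e.1 e.2 := by
      intro e he
      rw [hN, Multiset.mem_map] at he
      obtain ⟨e', he', rfl⟩ := he
      exact hM'.1 e' he'
    have hfst : N.map Prod.fst = (M'.map Prod.fst).map Subtype.val := by
      simp [hN, Multiset.map_map, Function.comp]
    have hsnd : N.map Prod.snd = (M'.map Prod.snd).map Subtype.val := by
      simp [hN, Multiset.map_map, Function.comp]
    have hcount : ∀ v : V, (N.map Prod.fst).count v + (N.map Prod.snd).count v ≤ 1 := by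
      intro v
      by_cases hv : v ∈ S
      · rw [hfst, hsnd]
        have h1 : ((M'.map Prod.fst).map Subtype.val).count v
            = (M'.map Prod.fst).count ⟨v, hv⟩ := by
          exact_mod_cast Multiset.count_map_eq_count' _ _ Subtype.val_injective ⟨v, hv⟩
        have h2 : ((M'.map Prod.snd).map Subtype.val).count v
            = (M'.map Prod.snd).count ⟨v, hv⟩ := by
          exact_mod_cast Multiset.count_map_eq_count' _ _ Subtype.val_injective ⟨v, hv⟩
        rw [h1, h2]
        convert hM'.2 ⟨v, hv⟩ using 2 <;> congr 1 <;> exact Subsingleton.elim _ _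
      · have h1 : ((M'.map Prod.fst).map Subtype.val).count v = 0 := by
          rw [Multiset.count_eq_zero]
          intro hmem
          obtain ⟨a, _, rfl⟩ := Multiset.mem_map.mp hmem
          exact hv a.2
        have h2 : ((M'.map Prod.snd).map Subtype.val).count v = 0 := by
          rw [Multiset.count_eq_zero]
          intro hmem
          obtain ⟨a, _, rfl⟩ := Multiset.mem_map.mp hmem
          exact hv a.2
        rw [hfst, hsnd, h1, h2]; simp
    have hNmatch : IsWMatching G (fun _ => 1) N := ⟨hNadj, hcount⟩
    have hcardN : Multiset.card N = Multiset.card M' := by simp [hN]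
    by_cases hdeg : wDeg G (fun _ => 1) i = 0
    · -- no neighbors: the induced graph is essentially G itself, contradiction
      have hle : Multiset.card M' ≤ wNu G (fun _ => 1) := hcardN ▸ le_wnu G hNmatch
      rw [hdeg] at hsat2
      omega
    · -- i has a neighbor j
      have hdeg1 : 1 ≤ wDeg G (fun _ => 1) i := Nat.one_le_iff_ne_zero.mpr hdeg
      have hex : ∃ j : V, G.Adj i j := by
        by_contra hno
        push_neg at hno
        have : wDeg G (fun _ => 1) i = 0 := by
          unfold wDeg
          rw [Finset.sum_eq_zero_iff]
          intro j hj
          rw [Finset.mem_filter] at hj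
          exact absurd hj.2 (hno j)
        exact hdeg this
      obtain ⟨j, hij⟩ := hex
      -- i is isolated in the induced graph, so it is unused by M'
      have hi_count : (N.map Prod.fst).count i = 0 ∧ (N.map Prod.snd).count i = 0 := by
        constructor
        · rw [Multiset.count_eq_zero]
          intro hmem
          rw [Multiset.mem_map] at hmem
          obtain ⟨e, he, hfst'⟩ := hmem
          have := hNadj e he
          rw [hfst'] at this
          obtain ⟨e', he', rfl⟩ := Multiset.mem_map.mp (by rw [hN] at he; exact he)
          exact e'.2.2 this
        · rw [Multiset.count_eq_zero]
          intro hmem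
          rw [Multiset.mem_map] at hmem
          obtain ⟨e, he, hsnd'⟩ := hmem
          have := hNadj e he
          rw [hsnd'] at this
          obtain ⟨e', he', rfl⟩ := Multiset.mem_map.mp (by rw [hN] at he; exact he)
          exact e'.1.2 (G.adj_symm this)
      -- j is a neighbor of i, so it is not in S and unused by N
      have hjS : j ∉ S := by simp [hS, hij]
      have hj_count : (N.map Prod.fst).count j = 0 ∧ (N.map Prod.snd).count j = 0 := by
        constructor
        · rw [hfst, Multiset.count_eq_zero]
          intro hmem
          obtain ⟨a, _, rfl⟩ := Multiset.mem_map.mp hmem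
          exact hjS a.2
        · rw [hsnd, Multiset.count_eq_zero]
          intro hmem
          obtain ⟨a, _, rfl⟩ := Multiset.mem_map.mp hmem
          exact hjS a.2
      -- extend the matching by the edge (i, j)
      have hne : i ≠ j := G.ne_of_adj hij
      have hN2 : IsWMatching G (fun _ => 1) ((i, j) ::ₘ N) := by
        constructor
        · intro e he
          rcases Multiset.mem_cons.mp he with rfl | he
          · exact hij
          · exact hNadj e he
        · intro v
          rw [Multiset.map_cons, Multiset.map_cons, Multiset.count_cons, Multiset.count_cons]
          by_cases hv1 : v = i
          · subst hv1
            simp [hne, hi_count.1, hi_count.2]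
          · by_cases hv2 : v = j
            · subst hv2
              simp [Ne.symm hne, hj_count.1, hj_count.2, hne]
            · have := hcount v
              simp only [hv1, hv2]
              simpa [Ne.symm hv1, Ne.symm hv2] using this
      have hle : Multiset.card M' + 1 ≤ wNu G (fun _ => 1) := by
        have h := le_wnu G hN2
        rw [Multiset.card_cons, hcardN] at h
        omega
      omega
  refine ⟨main, fun hν i => ?_⟩
  have := main i
  omega
end

section
/- Let Γ be a simple graph on 6 vertices with ν(Γ) = 3 in which every vertex has degree exactly 3, and which contains a triangle but no induced pentagon. Then Γ is the triangular prism: the disjoint union of two triangles together with a perfect matching between them (each vertex of one triangle joined to exactly one vertex of the other). -/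
open scoped Classical

/-- The cycle graph on `Fin n`. -/
def cyc (n : ℕ) [NeZero n] : SimpleGraph (Fin n) where
  Adj a b := a ≠ b ∧ (b = a + 1 ∨ a = b + 1)
  symm := by constructor; rintro a b ⟨h1, h2 | h2⟩ <;> exact ⟨h1.symm, by tauto⟩
  loopless := ⟨fun a h => h.1 rfl⟩

/-- The triangular prism: two triangles joined by a perfect matching. -/
def prism : SimpleGraph (Fin 3 ⊕ Fin 3) where
  Adj a b := match a, b with
    | Sum.inl x, Sum.inl y => x ≠ y
    | Sum.inr x, Sum.inr y => x ≠ y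
    | Sum.inl x, Sum.inr y => x = y
    | Sum.inr x, Sum.inl y => x = y
  symm := by constructor; rintro (x | x) (y | y) h <;> exact h.symm
  loopless := by constructor; rintro (x | x) h <;> exact h rfl


set_option linter.unusedVariables false in
private lemma prism_sums (ab ac ad ae af bc bd be bf cd ce cf de df ef : ℕ)
    (lad : ad ≤ 1) (lae : ae ≤ 1) (laf : af ≤ 1)
    (lbd : bd ≤ 1) (lbe : be ≤ 1) (lbf : bf ≤ 1)
    (lcd : cd ≤ 1) (lce : ce ≤ 1) (lcf : cf ≤ 1)
    (lde : de ≤ 1) (ldf : df ≤ 1) (lef : ef ≤ 1)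
    (kab : ab = 1) (kac : ac = 1) (kbc : bc = 1)
    (ra : ab + ac + ad + ae + af = 3)
    (rb : ab + bc + bd + be + bf = 3)
    (rc : ac + bc + cd + ce + cf = 3)
    (rd : ad + bd + cd + de + df = 3)
    (re : ae + be + ce + de + ef = 3)
    (rf : af + bf + cf + df + ef = 3) :
    de = 1 ∧ df = 1 ∧ ef = 1 ∧ ad + ae + af = 1 ∧ bd + be + bf = 1 ∧
    cd + ce + cf = 1 ∧ ad + bd + cd = 1 ∧ ae + be + ce = 1 ∧ af + bf + cf = 1 := by
  omega

set_option linter.unusedVariables false in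
private lemma leafA (ad ae af bd be bf cd ce cf : ℕ)
    (lad : ad ≤ 1) (lae : ae ≤ 1) (laf : af ≤ 1)
    (lbd : bd ≤ 1) (lbe : be ≤ 1) (lbf : bf ≤ 1)
    (lcd : cd ≤ 1) (lce : ce ≤ 1) (lcf : cf ≤ 1)
    (h4 : ad + ae + af = 1) (h5 : bd + be + bf = 1) (h6 : cd + ce + cf = 1)
    (h7 : ad + bd + cd = 1) (h8 : ae + be + ce = 1) (h9 : af + bf + cf = 1)
    (x0 : ad = 1) (x1 : be = 1) :
    cf = 1 ∧ ae = 0 ∧ af = 0 ∧ bd = 0 ∧ bf = 0 ∧ cd = 0 ∧ ce = 0 := by omega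

set_option linter.unusedVariables false in
private lemma leafB (ad ae af bd be bf cd ce cf : ℕ)
    (lad : ad ≤ 1) (lae : ae ≤ 1) (laf : af ≤ 1)
    (lbd : bd ≤ 1) (lbe : be ≤ 1) (lbf : bf ≤ 1)
    (lcd : cd ≤ 1) (lce : ce ≤ 1) (lcf : cf ≤ 1)
    (h4 : ad + ae + af = 1) (h5 : bd + be + bf = 1) (h6 : cd + ce + cf = 1)
    (h7 : ad + bd + cd = 1) (h8 : ae + be + ce = 1) (h9 : af + bf + cf = 1)
    (x0 : ad = 1) (x1 : be = 0) :
    bf = 1 ∧ ce = 1 ∧ ae = 0 ∧ af = 0 ∧ bd = 0 ∧ cd = 0 ∧ cf = 0 := by omega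

set_option linter.unusedVariables false in
private lemma leafC (ad ae af bd be bf cd ce cf : ℕ)
    (lad : ad ≤ 1) (lae : ae ≤ 1) (laf : af ≤ 1)
    (lbd : bd ≤ 1) (lbe : be ≤ 1) (lbf : bf ≤ 1)
    (lcd : cd ≤ 1) (lce : ce ≤ 1) (lcf : cf ≤ 1)
    (h4 : ad + ae + af = 1) (h5 : bd + be + bf = 1) (h6 : cd + ce + cf = 1)
    (h7 : ad + bd + cd = 1) (h8 : ae + be + ce = 1) (h9 : af + bf + cf = 1)
    (x0 : ad = 0) (x1 : ae = 1) (x2 : bd = 1) :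
    cf = 1 ∧ af = 0 ∧ be = 0 ∧ bf = 0 ∧ cd = 0 ∧ ce = 0 := by omega

set_option linter.unusedVariables false in
private lemma leafD (ad ae af bd be bf cd ce cf : ℕ)
    (lad : ad ≤ 1) (lae : ae ≤ 1) (laf : af ≤ 1)
    (lbd : bd ≤ 1) (lbe : be ≤ 1) (lbf : bf ≤ 1)
    (lcd : cd ≤ 1) (lce : ce ≤ 1) (lcf : cf ≤ 1)
    (h4 : ad + ae + af = 1) (h5 : bd + be + bf = 1) (h6 : cd + ce + cf = 1)
    (h7 : ad + bd + cd = 1) (h8 : ae + be + ce = 1) (h9 : af + bf + cf = 1)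
    (x0 : ad = 0) (x1 : ae = 1) (x2 : bd = 0) :
    bf = 1 ∧ cd = 1 ∧ af = 0 ∧ be = 0 ∧ ce = 0 ∧ cf = 0 := by omega

set_option linter.unusedVariables false in
private lemma leafE (ad ae af bd be bf cd ce cf : ℕ)
    (lad : ad ≤ 1) (lae : ae ≤ 1) (laf : af ≤ 1)
    (lbd : bd ≤ 1) (lbe : be ≤ 1) (lbf : bf ≤ 1)
    (lcd : cd ≤ 1) (lce : ce ≤ 1) (lcf : cf ≤ 1)
    (h4 : ad + ae + af = 1) (h5 : bd + be + bf = 1) (h6 : cd + ce + cf = 1)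
    (h7 : ad + bd + cd = 1) (h8 : ae + be + ce = 1) (h9 : af + bf + cf = 1)
    (x0 : ad = 0) (x1 : ae = 0) (x2 : bd = 1) :
    af = 1 ∧ ce = 1 ∧ be = 0 ∧ bf = 0 ∧ cd = 0 ∧ cf = 0 := by omega

set_option linter.unusedVariables false in
private lemma leafF (ad ae af bd be bf cd ce cf : ℕ)
    (lad : ad ≤ 1) (lae : ae ≤ 1) (laf : af ≤ 1)
    (lbd : bd ≤ 1) (lbe : be ≤ 1) (lbf : bf ≤ 1)
    (lcd : cd ≤ 1) (lce : ce ≤ 1) (lcf : cf ≤ 1)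
    (h4 : ad + ae + af = 1) (h5 : bd + be + bf = 1) (h6 : cd + ce + cf = 1)
    (h7 : ad + bd + cd = 1) (h8 : ae + be + ce = 1) (h9 : af + bf + cf = 1)
    (x0 : ad = 0) (x1 : ae = 0) (x2 : bd = 0) :
    af = 1 ∧ be = 1 ∧ cd = 1 ∧ bf = 0 ∧ ce = 0 ∧ cf = 0 := by omega

private lemma build_prism {V : Type*} (G : SimpleGraph V)
    (a b c d e f : V)
    (hall : ∀ v : V, v = a ∨ v = b ∨ v = c ∨ v = d ∨ v = e ∨ v = f)
    (hab : a ≠ b) (hac : a ≠ c) (had : a ≠ d) (hae : a ≠ e) (haf : a ≠ f)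
    (hbc : b ≠ c) (hbd : b ≠ d) (hbe : b ≠ e) (hbf : b ≠ f)
    (hcd : c ≠ d) (hce : c ≠ e) (hcf : c ≠ f)
    (hde : d ≠ e) (hdf : d ≠ f) (hef : e ≠ f)
    (Aab : G.Adj a b) (Aac : G.Adj a c) (Abc : G.Adj b c)
    (Ade : G.Adj d e) (Adf : G.Adj d f) (Aef : G.Adj e f)
    (Aad : G.Adj a d) (Abe : G.Adj b e) (Acf : G.Adj c f)
    (Nae : ¬ G.Adj a e) (Naf : ¬ G.Adj a f)
    (Nbd : ¬ G.Adj b d) (Nbf : ¬ G.Adj b f)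
    (Ncd : ¬ G.Adj c d) (Nce : ¬ G.Adj c e) :
    Nonempty (G ≃g prism) := by
  have Nea : ¬ G.Adj e a := fun h => Nae h.symm
  have Nfa : ¬ G.Adj f a := fun h => Naf h.symm
  have Ndb : ¬ G.Adj d b := fun h => Nbd h.symm
  have Nfb : ¬ G.Adj f b := fun h => Nbf h.symm
  have Ndc : ¬ G.Adj d c := fun h => Ncd h.symm
  have Nec : ¬ G.Adj e c := fun h => Nce h.symm
  refine ⟨⟨⟨fun v => if v = a then .inl 0 else if v = b then .inl 1 else if v = c then .inl 2
      else if v = d then .inr 0 else if v = e then .inr 1 else .inr 2,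
    Sum.elim ![a,b,c] ![d,e,f], ?_, ?_⟩, ?_⟩⟩
  · intro v
    rcases hall v with rfl|rfl|rfl|rfl|rfl|rfl <;>
      simp [hab, hac, had, hae, haf, hbc, hbd, hbe, hbf, hcd, hce, hcf, hde, hdf, hef,
        hab.symm, hac.symm, had.symm, hae.symm, haf.symm, hbc.symm, hbd.symm, hbe.symm,
        hbf.symm, hcd.symm, hce.symm, hcf.symm, hde.symm, hdf.symm, hef.symm]
  · rintro (x|x) <;> fin_cases x <;>
      simp [hab.symm, hac.symm, had.symm, hae.symm, haf.symm, hbc.symm, hbd.symm, hbe.symm,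
        hbf.symm, hcd.symm, hce.symm, hcf.symm, hde.symm, hdf.symm, hef.symm]
  · intro v w
    rcases hall v with rfl|rfl|rfl|rfl|rfl|rfl <;> rcases hall w with rfl|rfl|rfl|rfl|rfl|rfl <;>
      simp [prism, hab, hac, had, hae, haf, hbc, hbd, hbe, hbf, hcd, hce, hcf, hde, hdf, hef,
        hab.symm, hac.symm, had.symm, hae.symm, haf.symm, hbc.symm, hbd.symm, hbe.symm,
        hbf.symm, hcd.symm, hce.symm, hcf.symm, hde.symm, hdf.symm, hef.symm,
        Aab, Aac, Abc, Ade, Adf, Aef, Aad, Abe, Acf,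
        Aab.symm, Aac.symm, Abc.symm, Ade.symm, Adf.symm, Aef.symm, Aad.symm, Abe.symm, Acf.symm,
        Nae, Naf, Nbd, Nbf, Ncd, Nce, Nea, Nfa, Ndb, Nfb, Ndc, Nec]

set_option maxHeartbeats 1000000 in
/-- A cubic graph on 6 vertices with matching number 3, containing a triangle but
no induced pentagon, is the triangular prism. -/
theorem prism_of_cubic {V : Type*} [Fintype V] (G : SimpleGraph V)
    (hcard : Fintype.card V = 6)
    (hnu : wNu G (fun _ => 1) = 3)
    (hdeg : ∀ i : V, wDeg G (fun _ => 1) i = 3)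
    (htri : ∃ a b c : V, G.Adj a b ∧ G.Adj a c ∧ G.Adj b c)
    (hpent : ¬ ∃ f : Fin 5 → V, Function.Injective f ∧
      ∀ x y : Fin 5, G.Adj (f x) (f y) ↔ (cyc 5).Adj x y) :
    Nonempty (G ≃g prism) := by
  clear hnu hpent
  obtain ⟨a, b, c, Aab, Aac, Abc⟩ := htri
  have hab : a ≠ b := Aab.ne
  have hac : a ≠ c := Aac.ne
  have hbc : b ≠ c := Abc.ne
  have hT : ({a, b, c} : Finset V).card = 3 := by
    rw [Finset.card_insert_of_notMem (by simp [hab, hac]),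
      Finset.card_insert_of_notMem (by simp [hbc]), Finset.card_singleton]
  have hS : (Finset.univ \ {a, b, c} : Finset V).card = 3 := by
    rw [Finset.card_sdiff_of_subset (Finset.subset_univ _), Finset.card_univ, hcard, hT]
  obtain ⟨d, e, f, hde, hdf, hef, hSet⟩ := Finset.card_eq_three.mp hS
  have hdm : d ∈ Finset.univ \ ({a,b,c} : Finset V) := by rw [hSet]; simp
  have hem : e ∈ Finset.univ \ ({a,b,c} : Finset V) := by rw [hSet]; simp
  have hfm : f ∈ Finset.univ \ ({a,b,c} : Finset V) := by rw [hSet]; simp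
  simp only [Finset.mem_sdiff, Finset.mem_insert, Finset.mem_singleton, not_or] at hdm hem hfm
  obtain ⟨-, had, hbd, hcd⟩ := hdm
  obtain ⟨-, hae, hbe, hce⟩ := hem
  obtain ⟨-, haf, hbf, hcf⟩ := hfm
  replace had := Ne.symm had; replace hbd := Ne.symm hbd; replace hcd := Ne.symm hcd
  replace hae := Ne.symm hae; replace hbe := Ne.symm hbe; replace hce := Ne.symm hce
  replace haf := Ne.symm haf; replace hbf := Ne.symm hbf; replace hcf := Ne.symm hcf
  have huniv : (Finset.univ : Finset V) = {a, b, c, d, e, f} := by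
    symm
    apply Finset.eq_univ_of_card
    rw [hcard]
    repeat rw [Finset.card_insert_of_notMem (by simp_all [Finset.mem_insert])]
    rfl
  have hall : ∀ v : V, v = a ∨ v = b ∨ v = c ∨ v = d ∨ v = e ∨ v = f := by
    intro v
    have : v ∈ (Finset.univ : Finset V) := Finset.mem_univ v
    rw [huniv] at this
    simpa using this
  set A : V → V → ℕ := fun x y => if G.Adj x y then 1 else 0 with hA
  clear_value A
  have hrow : ∀ x : V, A x a + A x b + A x c + A x d + A x e + A x f = 3 := by
    intro x
    have h1 := hdeg x
    rw [wDeg, Finset.sum_const, smul_eq_mul, mul_one, Finset.card_filter, huniv] at h1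
    rw [Finset.sum_insert (by simp_all [Finset.mem_insert]),
      Finset.sum_insert (by simp_all [Finset.mem_insert]),
      Finset.sum_insert (by simp_all [Finset.mem_insert]),
      Finset.sum_insert (by simp_all [Finset.mem_insert]),
      Finset.sum_insert (by simp_all [Finset.mem_insert]),
      Finset.sum_singleton] at h1
    simpa [hA] using by linarith [h1]
  have hsym : ∀ x y, A x y = A y x := by
    intro x y; simp only [hA]; rw [G.adj_comm]
  have hle : ∀ x y, A x y ≤ 1 := by
    intro x y; simp only [hA]; split <;> omega
  have hself : ∀ x, A x x = 0 := by
    intro x; simp only [hA]; simp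
  have toAdj : ∀ x y, A x y = 1 → G.Adj x y := by
    intro x y h; by_contra hc; simp [hA, hc] at h
  have toNAdj : ∀ x y, A x y = 0 → ¬ G.Adj x y := by
    intro x y h hc; simp [hA, hc] at h
  have ra := hrow a; have rb := hrow b; have rc := hrow c
  have rd := hrow d; have re := hrow e; have rf := hrow f
  have kab : A a b = 1 := by simp [hA, Aab]
  have kac : A a c = 1 := by simp [hA, Aac]
  have kbc : A b c = 1 := by simp [hA, Abc]
  rw [hself a, zero_add] at ra
  rw [← hsym a b, hself b, add_zero] at rb
  rw [← hsym a c, ← hsym b c, hself c, add_zero] at rc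
  rw [← hsym a d, ← hsym b d, ← hsym c d, hself d, add_zero] at rd
  rw [← hsym a e, ← hsym b e, ← hsym c e, ← hsym d e, hself e, add_zero] at re
  rw [← hsym a f, ← hsym b f, ← hsym c f, ← hsym d f, ← hsym e f, hself f, add_zero] at rf
  obtain ⟨kde, kdf, kef, s1, s2, s3, s4, s5, s6⟩ :=
    prism_sums (A a b) (A a c) (A a d) (A a e) (A a f) (A b c) (A b d) (A b e) (A b f)
      (A c d) (A c e) (A c f) (A d e) (A d f) (A e f)
      (hle a d) (hle a e) (hle a f) (hle b d) (hle b e) (hle b f)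
      (hle c d) (hle c e) (hle c f) (hle d e) (hle d f) (hle e f)
      kab kac kbc ra rb rc rd re rf
  have Ade := toAdj _ _ kde
  have Adf := toAdj _ _ kdf
  have Aef := toAdj _ _ kef
  by_cases H1 : G.Adj a d
  · have kad : A a d = 1 := by simp [hA, H1]
    by_cases H2 : G.Adj b e
    · have kbe : A b e = 1 := by simp [hA, H2]
      obtain ⟨k1, k2, k3, k4, k5, k6, k7⟩ := leafA (A a d) (A a e) (A a f) (A b d) (A b e)
        (A b f) (A c d) (A c e) (A c f) (hle a d) (hle a e) (hle a f) (hle b d) (hle b e)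
        (hle b f) (hle c d) (hle c e) (hle c f) s1 s2 s3 s4 s5 s6 kad kbe
      exact build_prism G a b c d e f hall hab hac had hae haf hbc hbd hbe hbf hcd hce hcf
        hde hdf hef Aab Aac Abc Ade Adf Aef H1 H2 (toAdj _ _ k1)
        (toNAdj _ _ k2) (toNAdj _ _ k3) (toNAdj _ _ k4) (toNAdj _ _ k5)
        (toNAdj _ _ k6) (toNAdj _ _ k7)
    · have kbe : A b e = 0 := by simp [hA, H2]
      obtain ⟨k1, k2, k3, k4, k5, k6, k7⟩ := leafB (A a d) (A a e) (A a f) (A b d) (A b e)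
        (A b f) (A c d) (A c e) (A c f) (hle a d) (hle a e) (hle a f) (hle b d) (hle b e)
        (hle b f) (hle c d) (hle c e) (hle c f) s1 s2 s3 s4 s5 s6 kad kbe
      exact build_prism G a b c d f e (fun v => by have := hall v; tauto) hab hac had haf hae hbc hbd hbf hbe hcd hcf hce
        hdf hde (Ne.symm hef) Aab Aac Abc Adf Ade Aef.symm H1 (toAdj _ _ k1) (toAdj _ _ k2)
        (toNAdj _ _ k4) (toNAdj _ _ k3) (toNAdj _ _ k5) (toNAdj _ _ kbe)
        (toNAdj _ _ k6) (toNAdj _ _ k7)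
  · have kad : A a d = 0 := by simp [hA, H1]
    by_cases H2 : G.Adj a e
    · have kae : A a e = 1 := by simp [hA, H2]
      by_cases H3 : G.Adj b d
      · have kbd : A b d = 1 := by simp [hA, H3]
        obtain ⟨k1, k2, k3, k4, k5, k6⟩ := leafC (A a d) (A a e) (A a f) (A b d) (A b e)
          (A b f) (A c d) (A c e) (A c f) (hle a d) (hle a e) (hle a f) (hle b d) (hle b e)
          (hle b f) (hle c d) (hle c e) (hle c f) s1 s2 s3 s4 s5 s6 kad kae kbd
        exact build_prism G a b c e d f (fun v => by have := hall v; tauto) hab hac hae had haf hbc hbe hbd hbf hce hcd hcf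
          (Ne.symm hde) hef hdf Aab Aac Abc Ade.symm Aef Adf H2 H3 (toAdj _ _ k1)
          (toNAdj _ _ kad) (toNAdj _ _ k2) (toNAdj _ _ k3) (toNAdj _ _ k4)
          (toNAdj _ _ k6) (toNAdj _ _ k5)
      · have kbd : A b d = 0 := by simp [hA, H3]
        obtain ⟨k1, k2, k3, k4, k5, k6⟩ := leafD (A a d) (A a e) (A a f) (A b d) (A b e)
          (A b f) (A c d) (A c e) (A c f) (hle a d) (hle a e) (hle a f) (hle b d) (hle b e)
          (hle b f) (hle c d) (hle c e) (hle c f) s1 s2 s3 s4 s5 s6 kad kae kbd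
        exact build_prism G a b c e f d (fun v => by have := hall v; tauto) hab hac hae haf had hbc hbe hbf hbd hce hcf hcd
          hef (Ne.symm hde) (Ne.symm hdf) Aab Aac Abc Aef Ade.symm Adf.symm H2 (toAdj _ _ k1)
          (toAdj _ _ k2) (toNAdj _ _ k3) (toNAdj _ _ kad) (toNAdj _ _ k4) (toNAdj _ _ kbd)
          (toNAdj _ _ k5) (toNAdj _ _ k6)
    · have kae : A a e = 0 := by simp [hA, H2]
      by_cases H3 : G.Adj b d
      · have kbd : A b d = 1 := by simp [hA, H3]
        obtain ⟨k1, k2, k3, k4, k5, k6⟩ := leafE (A a d) (A a e) (A a f) (A b d) (A b e)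
          (A b f) (A c d) (A c e) (A c f) (hle a d) (hle a e) (hle a f) (hle b d) (hle b e)
          (hle b f) (hle c d) (hle c e) (hle c f) s1 s2 s3 s4 s5 s6 kad kae kbd
        exact build_prism G a b c f d e (fun v => by have := hall v; tauto) hab hac haf had hae hbc hbf hbd hbe hcf hcd hce
          (Ne.symm hdf) (Ne.symm hef) hde Aab Aac Abc Adf.symm Aef.symm Ade
          (toAdj _ _ k1) H3 (toAdj _ _ k2)
          (toNAdj _ _ kad) (toNAdj _ _ kae) (toNAdj _ _ k4) (toNAdj _ _ k3)
          (toNAdj _ _ k6) (toNAdj _ _ k5)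
      · have kbd : A b d = 0 := by simp [hA, H3]
        obtain ⟨k1, k2, k3, k4, k5, k6⟩ := leafF (A a d) (A a e) (A a f) (A b d) (A b e)
          (A b f) (A c d) (A c e) (A c f) (hle a d) (hle a e) (hle a f) (hle b d) (hle b e)
          (hle b f) (hle c d) (hle c e) (hle c f) s1 s2 s3 s4 s5 s6 kad kae kbd
        exact build_prism G a b c f e d (fun v => by have := hall v; tauto) hab hac haf hae had hbc hbf hbe hbd hcf hce hcd
          (Ne.symm hef) (Ne.symm hdf) (Ne.symm hde) Aab Aac Abc Aef.symm Adf.symm Ade.symm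
          (toAdj _ _ k1) (toAdj _ _ k2) (toAdj _ _ k3)
          (toNAdj _ _ kae) (toNAdj _ _ kad) (toNAdj _ _ k4) (toNAdj _ _ kbd)
          (toNAdj _ _ k6) (toNAdj _ _ k5)
end
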